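/- arXiv:math/0209222 — 6 statements merged into one kernel-verified Lean document; each statement's English description precedes it below -/
import Mathlib

section
/- Let X and Y be Hilbert spaces and let B : X → Y be a bounded linear operator which is surjective. Then the bounded linear operator J : X × Y → X × Y defined by J(x,u) = (x + B*u, Bx) is invertible, i.e. J⁻¹ exists as a bounded linear operator from X × Y to itself. -/
/-!
Since `B` is surjective, the open mapping theorem makes `B*` bounded below, so
`⟪B B* u, u⟫ = ‖B* u‖²` shows that `B B*` is coercive and hence invertible by Lax–Milgram.
Eliminating `x` from `x + B* u = a`, `B x = b` through this Schur complement gives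
`J⁻¹ (a, b) = (a - B* u, u)` with `u = (B B*)⁻¹ (B a - b)`.
-/

open ContinuousLinearMap
open scoped InnerProductSpace

section Block

variable {R X Y : Type*} [Ring R] [TopologicalSpace X] [AddCommGroup X] [Module R X]
  [IsTopologicalAddGroup X] [TopologicalSpace Y] [AddCommGroup Y] [Module R Y]
  [IsTopologicalAddGroup Y]

theorem exists_continuousLinearEquiv_block_of_comp_eq (A : Y →L[R] X) (B : X →L[R] Y)
    (T : Y ≃L[R] Y) (hBA : ∀ y, B (A y) = T y) :
    ∃ J : (X × Y) ≃L[R] (X × Y), ∀ p : X × Y, J p = (p.1 + A p.2, B p.1) := by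
  let S : (X × Y) →L[R] Y := (T.symm : Y →L[R] Y) ∘L (B ∘L fst R X Y - snd R X Y)
  let J : (X × Y) →L[R] (X × Y) := (fst R X Y + A ∘L snd R X Y).prod (B ∘L fst R X Y)
  let K : (X × Y) →L[R] (X × Y) := (fst R X Y - A ∘L S).prod S
  have hKJ : ∀ p, K (J p) = p := by
    rintro ⟨x, u⟩
    simp [K, J, S, hBA]
  have hJK : ∀ p, J (K p) = p := by
    rintro ⟨a, b⟩
    simp [J, K, S, hBA]
  exact ⟨ContinuousLinearEquiv.equivOfInverse J K hKJ hJK, fun p => rfl⟩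

end Block

section Adjoint

variable {X Y : Type*} [NormedAddCommGroup X] [InnerProductSpace ℝ X] [CompleteSpace X]
  [NormedAddCommGroup Y] [InnerProductSpace ℝ Y] [CompleteSpace Y]

theorem ContinuousLinearMap.exists_pos_mul_norm_le_norm_adjoint {B : X →L[ℝ] Y}
    (hB : Function.Surjective B) : ∃ c > 0, ∀ u, c * ‖u‖ ≤ ‖adjoint B u‖ := by
  obtain ⟨C, hC, hpre⟩ := B.exists_preimage_norm_le hB
  refine ⟨C⁻¹, inv_pos.2 hC, fun u => ?_⟩
  obtain ⟨x, rfl, hx⟩ := hpre u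
  rw [inv_mul_le_iff₀ hC]
  rcases (norm_nonneg (B x)).eq_or_lt with h | h
  · rw [← h]; positivity
  refine le_of_mul_le_mul_right ?_ h
  calc ‖B x‖ * ‖B x‖ = ⟪adjoint B (B x), x⟫_ℝ := by
        rw [adjoint_inner_left, real_inner_self_eq_norm_mul_norm]
    _ ≤ ‖adjoint B (B x)‖ * ‖x‖ := real_inner_le_norm _ _
    _ ≤ ‖adjoint B (B x)‖ * (C * ‖B x‖) := by gcongr
    _ = C * ‖adjoint B (B x)‖ * ‖B x‖ := by ring

theorem ContinuousLinearMap.isCoercive_innerSL_comp_comp_adjoint {B : X →L[ℝ] Y}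
    (hB : Function.Surjective B) :
    IsCoercive ((innerSL ℝ : Y →L[ℝ] Y →L[ℝ] ℝ) ∘L (B ∘L adjoint B)) := by
  obtain ⟨c, hc, hlow⟩ := B.exists_pos_mul_norm_le_norm_adjoint hB
  refine ⟨c ^ 2, by positivity, fun u => ?_⟩
  calc c ^ 2 * ‖u‖ * ‖u‖ = (c * ‖u‖) ^ 2 := by ring
    _ ≤ ‖adjoint B u‖ ^ 2 := by gcongr; exact hlow u
    _ = ⟪(B ∘L adjoint B) u, u⟫_ℝ := by
      simpa using (adjoint B).apply_norm_sq_eq_inner_adjoint_left u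
    _ = _ := (innerSL_apply_apply ..).symm

end Adjoint

/-- If `B : X → Y` is a surjective bounded linear operator between Hilbert spaces, then
the bounded linear operator `J(x,u) = (x + B* u, B x)` on `X × Y` is invertible, i.e.
it agrees with a continuous linear equivalence of `X × Y` onto itself (so that `J⁻¹`
is a bounded linear operator). -/
theorem surjective_adjoint_block_operator_invertible
    {X Y : Type*} [NormedAddCommGroup X] [InnerProductSpace ℝ X] [CompleteSpace X]
    [NormedAddCommGroup Y] [InnerProductSpace ℝ Y] [CompleteSpace Y]
    (B : X →L[ℝ] Y) (hsurj : Function.Surjective B) :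
    ∃ J : (X × Y) ≃L[ℝ] (X × Y),
      ∀ p : X × Y, J p = (p.1 + ContinuousLinearMap.adjoint B p.2, B p.1) := by
  have hcoercive := B.isCoercive_innerSL_comp_comp_adjoint hsurj
  refine exists_continuousLinearEquiv_block_of_comp_eq (adjoint B) B
    hcoercive.continuousLinearEquivOfBilin fun y => ext_inner_right ℝ fun w =>
      ((hcoercive.continuousLinearEquivOfBilin_apply y w).trans (innerSL_apply_apply ..)).symm
end

section
/- Let X and Y be Banach spaces and let f : X → Y be a function which is strictly differentiable at x̄ and such that the strict derivative ∇f(x̄) is surjective. Then there exist a neighborhood V of ȳ := f(x̄), a continuous function x : V → X, and a constant γ > 0 such that f(x(y)) = y and ‖x(y) − x̄‖ ≤ γ‖y − ȳ‖ for every y ∈ V. -/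
/-!
By the open mapping theorem every `y ≠ 0` has a preimage under `B` of norm at most `K‖y‖`, and
that preimage is still an approximate preimage, with relative error `ε`, of every point near `y`.
Approximate preimages form convex sets, so a partition of unity on `Y \ {0}` glues these local
choices into a continuous `r` with `‖r y‖ ≤ C‖y‖` and `‖B (r y) - y‖ ≤ ε‖y‖`.

With `ε = 1/4`, on a ball where `f` is `1/(4C)`-close to `B`, the chord iteration
`x₀ = x̄`, `xₙ₊₁ = xₙ + r (y - f xₙ)` halves the residual `y - f xₙ` at every step while moving
by at most `C` times the residual. So it stays in the ball and converges uniformly for `y` near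
`f x̄`, and its limit is a continuous solution of `f x = y` with `‖x - x̄‖ ≤ 2C‖y - f x̄‖`.
-/

open Set Filter Metric Topology NNReal

namespace ContinuousLinearMap

variable {X Y : Type*} [NormedAddCommGroup X] [NormedSpace ℝ X] [CompleteSpace X]
  [NormedAddCommGroup Y] [NormedSpace ℝ Y] [CompleteSpace Y]

theorem exists_continuous_approx_rightInverse (B : X →L[ℝ] Y) (hB : Function.Surjective B)
    {ε : ℝ} (hε : 0 < ε) :
    ∃ C > 0, ∃ r : Y → X, Continuous r ∧ (∀ y, ‖r y‖ ≤ C * ‖y‖) ∧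
      ∀ y, ‖B (r y) - y‖ ≤ ε * ‖y‖ := by
  obtain ⟨K, hK, hpre⟩ := B.exists_preimage_norm_le hB
  choose σ hσB hσ using hpre
  let t : {y : Y // y ≠ 0} → Set X := fun y =>
    closedBall 0 (2 * K * ‖(y : Y)‖) ∩ B ⁻¹' closedBall (y : Y) (ε * ‖(y : Y)‖)
  have ht_convex (y) : Convex ℝ (t y) :=
    (convex_closedBall _ _).inter ((convex_closedBall _ _).linear_preimage (B : X →ₗ[ℝ] Y))
  have ht_local (y : {y : Y // y ≠ 0}) : ∃ x, ∀ᶠ z in 𝓝 y, x ∈ t z := by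
    have hρ : 0 < min (1 / 2) (ε / 2) * ‖(y : Y)‖ := by
      have := norm_pos_iff.2 y.2
      positivity
    refine ⟨σ y, ?_⟩
    filter_upwards [continuousAt_subtype_val.preimage_mem_nhds (ball_mem_nhds _ hρ)] with z hz
    have hzy : ‖(z : Y) - y‖ < min (1 / 2) (ε / 2) * ‖(y : Y)‖ := mem_ball_iff_norm.1 hz
    have hmin₁ := min_le_left (1 / 2) (ε / 2)
    have hmin₂ := min_le_right (1 / 2) (ε / 2)
    have hy_le : ‖(y : Y)‖ ≤ 2 * ‖(z : Y)‖ := by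
      have := norm_le_norm_add_norm_sub' (y : Y) (z : Y)
      rw [norm_sub_rev] at this
      nlinarith [norm_nonneg (y : Y)]
    refine ⟨mem_closedBall_zero_iff.2 ?_, mem_closedBall_iff_norm.2 ?_⟩
    · calc ‖σ y‖ ≤ K * ‖(y : Y)‖ := hσ y
        _ ≤ 2 * K * ‖(z : Y)‖ := by nlinarith
    · rw [hσB, norm_sub_rev]
      nlinarith [norm_nonneg (y : Y)]
  obtain ⟨g, hg⟩ := exists_continuous_forall_mem_convex_of_local_const ht_convex ht_local
  classical
  let r : Y → X := fun y => if hy : y = 0 then 0 else g ⟨y, hy⟩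
  have hr (y : Y) : ‖r y‖ ≤ 2 * K * ‖y‖ ∧ ‖B (r y) - y‖ ≤ ε * ‖y‖ := by
    by_cases hy : y = 0
    · simp [r, hy]
    · have := hg ⟨y, hy⟩
      simp only [r, dif_neg hy]
      exact ⟨mem_closedBall_zero_iff.1 this.1, mem_closedBall_iff_norm.1 this.2⟩
  refine ⟨2 * K, by positivity, r, continuous_iff_continuousAt.2 fun y => ?_,
    fun y => (hr y).1, fun y => (hr y).2⟩
  by_cases hy : y = 0
  · subst hy
    have hr0 : r 0 = 0 := dif_pos rfl
    rw [ContinuousAt, hr0]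
    refine squeeze_zero_norm (fun z => (hr z).1) ?_
    simpa using (continuous_norm.tendsto (0 : Y)).const_mul (2 * K)
  · have : ContinuousOn r {y | y ≠ 0} := by
      rw [continuousOn_iff_continuous_domRestrict]
      refine g.continuous.congr fun z => ?_
      simp [r, z.2]
    exact this.continuousAt (isOpen_compl_singleton.mem_nhds hy)

end ContinuousLinearMap

section ApproxNewton

variable {𝕜 : Type*} [NontriviallyNormedField 𝕜] {X Y : Type*}
  [NormedAddCommGroup X] [NormedSpace 𝕜 X] [NormedAddCommGroup Y] [NormedSpace 𝕜 Y]

theorem ApproximatesLinearOn.norm_sub_apply_add_le {f : X → Y} {B : X →L[𝕜] Y} {s : Set X}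
    {c : ℝ≥0} (hf : ApproximatesLinearOn f B s c) {x d : X} (hx : x ∈ s) (hxd : x + d ∈ s)
    (y : Y) : ‖y - f (x + d)‖ ≤ ‖B d - (y - f x)‖ + c * ‖d‖ := by
  have hd : ‖f (x + d) - f x - B d‖ ≤ c * ‖d‖ := by simpa using hf _ hxd _ hx
  calc ‖y - f (x + d)‖ = ‖-(B d - (y - f x)) - (f (x + d) - f x - B d)‖ := by congr 1; abel
    _ ≤ ‖B d - (y - f x)‖ + c * ‖d‖ := (norm_sub_le _ _).trans (by rw [norm_neg]; gcongr)

def approxNewtonSeq (f : X → Y) (r : Y → X) (x₀ : X) (y : Y) : ℕ → X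
  | 0 => x₀
  | n + 1 => approxNewtonSeq f r x₀ y n + r (y - f (approxNewtonSeq f r x₀ y n))

variable {f : X → Y} {B : X →L[𝕜] Y} {r : Y → X} {x₀ : X} {R C ε : ℝ} {c : ℝ≥0}

theorem approxNewtonSeq_norm_bounds (hf : ApproximatesLinearOn f B (ball x₀ R) c)
    (hC : 0 ≤ C) (hr : ∀ v, ‖r v‖ ≤ C * ‖v‖) (hBr : ∀ v, ‖B (r v) - v‖ ≤ ε * ‖v‖)
    (hcontr : ε + c * C ≤ 1 / 2) {y : Y} (hy : 2 * C * ‖y - f x₀‖ < R) (n : ℕ) :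
    ‖y - f (approxNewtonSeq f r x₀ y n)‖ ≤ ‖y - f x₀‖ / 2 ^ n ∧
      ‖approxNewtonSeq f r x₀ y n - x₀‖ ≤ 2 * C * ‖y - f x₀‖ - 2 * C * ‖y - f x₀‖ / 2 ^ n := by
  set a := ‖y - f x₀‖
  induction n with
  | zero => simp [approxNewtonSeq, a]
  | succ n ih =>
    set x := approxNewtonSeq f r x₀ y n
    set d := r (y - f x)
    obtain ⟨hres, hdist⟩ := ih
    have hd : ‖d‖ ≤ C * (a / 2 ^ n) := (hr _).trans (by gcongr)
    have hpow : 0 ≤ 2 * C * a / 2 ^ (n + 1) := by positivity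
    have hnext : ‖x + d - x₀‖ ≤ 2 * C * a - 2 * C * a / 2 ^ (n + 1) :=
      calc ‖x + d - x₀‖ ≤ ‖x - x₀‖ + ‖d‖ := by rw [add_sub_right_comm]; exact norm_add_le _ _
        _ ≤ 2 * C * a - 2 * C * a / 2 ^ n + C * (a / 2 ^ n) := add_le_add hdist hd
        _ = 2 * C * a - 2 * C * a / 2 ^ (n + 1) := by rw [pow_succ]; field_simp; ring
    have hx : x ∈ ball x₀ R := mem_ball_iff_norm.2 (by
      have : 0 ≤ 2 * C * a / 2 ^ n := by positivity
      linarith)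
    have hxd : x + d ∈ ball x₀ R := mem_ball_iff_norm.2 (by linarith)
    refine ⟨?_, hnext⟩
    calc ‖y - f (x + d)‖ ≤ ‖B d - (y - f x)‖ + c * ‖d‖ := hf.norm_sub_apply_add_le hx hxd y
      _ ≤ ε * ‖y - f x‖ + c * (C * ‖y - f x‖) := by gcongr; exacts [hBr _, hr _]
      _ = (ε + c * C) * ‖y - f x‖ := by ring
      _ ≤ 1 / 2 * (a / 2 ^ n) := by gcongr
      _ = a / 2 ^ (n + 1) := by rw [pow_succ]; ring

section Estimates

variable (hf : ApproximatesLinearOn f B (ball x₀ R) c) (hC : 0 ≤ C)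
  (hr : ∀ v, ‖r v‖ ≤ C * ‖v‖) (hBr : ∀ v, ‖B (r v) - v‖ ≤ ε * ‖v‖) (hcontr : ε + c * C ≤ 1 / 2)
include hf hC hr hBr hcontr

theorem approxNewtonSeq_mem_ball {y : Y} (hy : 2 * C * ‖y - f x₀‖ < R) (n : ℕ) :
    approxNewtonSeq f r x₀ y n ∈ ball x₀ R := by
  have := (approxNewtonSeq_norm_bounds hf hC hr hBr hcontr hy n).2
  have : 0 ≤ 2 * C * ‖y - f x₀‖ / 2 ^ n := by positivity
  exact mem_ball_iff_norm.2 (by linarith)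

theorem dist_approxNewtonSeq_succ_le {y : Y} (hy : 2 * C * ‖y - f x₀‖ < R) (n : ℕ) :
    dist (approxNewtonSeq f r x₀ y n) (approxNewtonSeq f r x₀ y (n + 1)) ≤
      2 * C * ‖y - f x₀‖ / 2 / 2 ^ n := by
  rw [dist_eq_norm, approxNewtonSeq, sub_add_cancel_left, norm_neg]
  calc _ ≤ C * ‖y - f (approxNewtonSeq f r x₀ y n)‖ := hr _
    _ ≤ C * (‖y - f x₀‖ / 2 ^ n) := by
      gcongr; exact (approxNewtonSeq_norm_bounds hf hC hr hBr hcontr hy n).1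
    _ = 2 * C * ‖y - f x₀‖ / 2 / 2 ^ n := by ring

theorem continuousOn_approxNewtonSeq (hrc : Continuous r) (n : ℕ) :
    ContinuousOn (fun y => approxNewtonSeq f r x₀ y n) {y | 2 * C * ‖y - f x₀‖ < R} := by
  induction n with
  | zero => exact continuousOn_const
  | succ n ih =>
    refine ih.add (hrc.comp_continuousOn (continuousOn_id.sub (hf.continuousOn.comp ih ?_)))
    exact fun y hy => approxNewtonSeq_mem_ball hf hC hr hBr hcontr hy n

theorem ApproximatesLinearOn.exists_continuousOn_rightInverse [CompleteSpace X]
    (hrc : Continuous r) :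
    ∃ s : Y → X, ContinuousOn s {y | 2 * C * ‖y - f x₀‖ < R} ∧
      ∀ y ∈ {y | 2 * C * ‖y - f x₀‖ < R}, f (s y) = y ∧ ‖s y - x₀‖ ≤ 2 * C * ‖y - f x₀‖ := by
  set V := {y | 2 * C * ‖y - f x₀‖ < R}
  let s y := limUnder atTop (approxNewtonSeq f r x₀ y)
  have hlim (y) (hy : y ∈ V) : Tendsto (approxNewtonSeq f r x₀ y) atTop (𝓝 (s y)) :=
    (cauchySeq_of_le_geometric_two (dist_approxNewtonSeq_succ_le hf hC hr hBr hcontr hy))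
      |>.tendsto_limUnder
  have hdist (y) (hy : y ∈ V) (n : ℕ) :
      dist (approxNewtonSeq f r x₀ y n) (s y) ≤ 2 * C * ‖y - f x₀‖ / 2 ^ n :=
    dist_le_of_le_geometric_two_of_tendsto (dist_approxNewtonSeq_succ_le hf hC hr hBr hcontr hy)
      (hlim y hy) n
  have hunif : TendstoUniformlyOn (fun n y => approxNewtonSeq f r x₀ y n) s atTop V := by
    rw [Metric.tendstoUniformlyOn_iff]
    intro δ hδ
    have hgeom : Tendsto (fun n : ℕ => R / 2 ^ n) atTop (𝓝 0) :=
      tendsto_const_nhds.div_atTop (tendsto_pow_atTop_atTop_of_one_lt one_lt_two)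
    filter_upwards [hgeom.eventually (gt_mem_nhds hδ)] with n hn y hy
    rw [dist_comm]
    exact (hdist y hy n).trans_lt (lt_of_le_of_lt (by gcongr; exact le_of_lt hy) hn)
  refine ⟨s, hunif.continuousOn (.of_forall fun n =>
    continuousOn_approxNewtonSeq hf hC hr hBr hcontr hrc n), fun y hy => ?_⟩
  have hbound : ‖s y - x₀‖ ≤ 2 * C * ‖y - f x₀‖ := by
    simpa [approxNewtonSeq, dist_eq_norm, norm_sub_rev] using hdist y hy 0
  refine ⟨tendsto_nhds_unique (f := fun n => f (approxNewtonSeq f r x₀ y n)) (l := atTop) ?_ ?_,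
    hbound⟩
  · exact (hf.continuousOn.continuousAt (isOpen_ball.mem_nhds
      (mem_ball_iff_norm.2 (hbound.trans_lt hy)))).tendsto.comp (hlim y hy)
  · rw [tendsto_iff_norm_sub_tendsto_zero]
    refine squeeze_zero_norm (fun n => ?_) ((tendsto_const_nhds (x := ‖y - f x₀‖)).div_atTop
      (tendsto_pow_atTop_atTop_of_one_lt one_lt_two))
    rw [norm_norm, norm_sub_rev]
    exact (approxNewtonSeq_norm_bounds hf hC hr hBr hcontr hy n).1

end Estimates

end ApproxNewton

/-- Inverse function theorem with surjective strict derivative in Banach spaces: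
if `f` is strictly differentiable at `xbar` with surjective strict derivative `B`,
then there exist a neighborhood `V` of `ybar := f xbar`, a continuous function
`s : V → X` and a constant `γ > 0` such that `f (s y) = y` and
`‖s y - xbar‖ ≤ γ‖y - ybar‖` for every `y ∈ V`. -/
theorem continuous_calm_inverse_selection_of_surjective_strict_deriv
    {X Y : Type*} [NormedAddCommGroup X] [NormedSpace ℝ X] [CompleteSpace X]
    [NormedAddCommGroup Y] [NormedSpace ℝ Y] [CompleteSpace Y]
    (f : X → Y) (xbar : X) (B : X →L[ℝ] Y)
    (hf : HasStrictFDerivAt f B xbar) (hsurj : Function.Surjective B) :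
    ∃ V ∈ nhds (f xbar), ∃ s : Y → X, ∃ γ : ℝ, 0 < γ ∧
      ContinuousOn s V ∧
      ∀ y ∈ V, f (s y) = y ∧ ‖s y - xbar‖ ≤ γ * ‖y - f xbar‖ := by
  obtain ⟨C, hC, r, hrc, hr, hBr⟩ :=
    B.exists_continuous_approx_rightInverse hsurj (ε := 1 / 4) (by norm_num)
  let c : ℝ≥0 := ⟨(4 * C)⁻¹, by positivity⟩
  have hcpos : 0 < c := NNReal.coe_pos.1 (show (0 : ℝ) < (4 * C)⁻¹ by positivity)
  have hcontr : 1 / 4 + c * C ≤ 1 / 2 := by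
    have hcC : (4 * C)⁻¹ * C = 1 / 4 := by field_simp
    show 1 / 4 + (4 * C)⁻¹ * C ≤ 1 / 2
    rw [hcC]
    norm_num
  obtain ⟨U, hU, hfU⟩ := hf.approximates_deriv_on_nhds (Or.inr hcpos)
  obtain ⟨R, hR, hRU⟩ := Metric.mem_nhds_iff.1 hU
  obtain ⟨s, hs, hsol⟩ :=
    (hfU.mono_set hRU).exists_continuousOn_rightInverse hC.le hr hBr hcontr hrc
  refine ⟨_, ?_, s, 2 * C, by positivity, hs, hsol⟩
  exact (isOpen_lt (by fun_prop) continuous_const).mem_nhds (by simpa using hR)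
end

section
/- Let X and Y be Banach spaces, let A : Y ⇒ X be a set-valued mapping, let (ȳ, x̄) ∈ gph A, and suppose A has the Aubin property at ȳ for x̄ with constant κ > 0. Suppose for some c > 0 the sets A(y) ∩ B_c(x̄) are convex and closed for all y ∈ B_c(ȳ). Then for any α > κ there exists β > 0 such that the mapping M₀ defined on B_β(ȳ) by M₀(y) := {x ∈ A(y) : ‖x − x̄‖ ≤ α‖y − ȳ‖} has nonempty, closed and convex values, and is lower semicontinuous on B_β(ȳ). -/
open Metric Filter

/-- A set-valued mapping `A : Y ⇒ X` has the Aubin property at `ybar` for `xbar` with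
constant `κ` if there are neighborhoods (balls) of `xbar` and `ybar` such that
`A(y') ∩ U ⊆ A(y) + κ‖y' - y‖ 𝔹` for all `y, y'` in the neighborhood of `ybar`. -/
def HasAubinPropertyWith {X Y : Type*} [NormedAddCommGroup X] [NormedAddCommGroup Y]
    (A : Y → Set X) (ybar : Y) (xbar : X) (κ : ℝ) : Prop :=
  ∃ ε > (0 : ℝ), ∀ y ∈ ball ybar ε, ∀ y' ∈ ball ybar ε,
    ∀ x ∈ A y' ∩ ball xbar ε, ∃ z ∈ A y, ‖x - z‖ ≤ κ * ‖y' - y‖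

/-- Sequential lower semicontinuity of a set-valued mapping `M` on a set `V`:
for every `y ∈ V`, `x ∈ M y` and sequence `y_k → y` in `V`, there are `x_k ∈ M (y_k)`
with `x_k → x`. -/
def LowerSemicontinuousSVMOn {X Y : Type*} [NormedAddCommGroup X] [NormedAddCommGroup Y]
    (M : Y → Set X) (V : Set Y) : Prop :=
  ∀ y ∈ V, ∀ x ∈ M y, ∀ yk : ℕ → Y, (∀ k, yk k ∈ V) → Tendsto yk atTop (nhds y) →
    ∃ xk : ℕ → X, (∀ k, xk k ∈ M (yk k)) ∧ Tendsto xk atTop (nhds x)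

set_option maxHeartbeats 1000000 in
/-- Lemma 2.1: if `A : Y ⇒ X` is Aubin continuous at `ybar` for `xbar` with constant `κ`
and its values truncated by a ball around `xbar` are convex and closed, then for any
`α > κ` there is `β > 0` such that `M₀(y) = {x ∈ A y : ‖x - xbar‖ ≤ α‖y - ybar‖}` is
nonempty, closed and convex valued and lower semicontinuous on the ball of radius `β`. -/
theorem truncated_aubin_mapping_lsc
    {X Y : Type*} [NormedAddCommGroup X] [NormedSpace ℝ X] [CompleteSpace X]
    [NormedAddCommGroup Y] [NormedSpace ℝ Y] [CompleteSpace Y]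
    (A : Y → Set X) (ybar : Y) (xbar : X) (hmem : xbar ∈ A ybar)
    (κ : ℝ) (hκ : 0 < κ) (hA : HasAubinPropertyWith A ybar xbar κ)
    (c : ℝ) (hc : 0 < c)
    (hcc : ∀ y ∈ closedBall ybar c,
      Convex ℝ (A y ∩ closedBall xbar c) ∧ IsClosed (A y ∩ closedBall xbar c)) :
    ∀ α : ℝ, κ < α → ∃ β > (0 : ℝ),
      (∀ y ∈ closedBall ybar β,
        ({x ∈ A y | ‖x - xbar‖ ≤ α * ‖y - ybar‖}).Nonempty ∧
        IsClosed {x ∈ A y | ‖x - xbar‖ ≤ α * ‖y - ybar‖} ∧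
        Convex ℝ {x ∈ A y | ‖x - xbar‖ ≤ α * ‖y - ybar‖}) ∧
      LowerSemicontinuousSVMOn (fun y => {x ∈ A y | ‖x - xbar‖ ≤ α * ‖y - ybar‖})
        (closedBall ybar β) := by
  obtain ⟨ε, hε, haubin⟩ := hA
  intro α hα
  have hα0 : (0:ℝ) < α := hκ.trans hα
  set β : ℝ := min ε c / (2 * (1 + κ + α)) with hβdef
  have hden : (0:ℝ) < 2 * (1 + κ + α) := by positivity
  have hminpos : (0:ℝ) < min ε c := lt_min hε hc
  have hβ : 0 < β := div_pos hminpos hden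
  have hkey : ∀ t : ℝ, t ≤ 1 + κ + α → t * β ≤ min ε c / 2 := by
    intro t ht
    have h1 : t * β ≤ (1 + κ + α) * β := mul_le_mul_of_nonneg_right ht hβ.le
    have h2 : (1 + κ + α) * β = min ε c / 2 := by
      rw [hβdef]; field_simp
    linarith
  have hkey2 : ∀ t : ℝ, t ≤ 2 * (1 + κ + α) → t * β ≤ min ε c := by
    intro t ht
    have h1 : t * β ≤ (2 * (1 + κ + α)) * β := mul_le_mul_of_nonneg_right ht hβ.le
    have h2 : (2 * (1 + κ + α)) * β = min ε c := by
      rw [hβdef]; field_simp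
    linarith
  have hminε : min ε c ≤ ε := min_le_left _ _
  have hminc : min ε c ≤ c := min_le_right _ _
  have hβε : β < ε := by have := hkey 1 (by linarith); linarith
  have hαβε : α * β < ε := by have := hkey α (by linarith); linarith
  have hβc : β ≤ c := by have := hkey 1 (by linarith); linarith
  have hαβc : α * β ≤ c := by have := hkey α (by linarith); linarith
  have hκβc : κ * β ≤ c := by have := hkey κ (by linarith); linarith
  have h2κα : (2*κ + α) * β ≤ c := by have := hkey2 (2*κ+α) (by linarith); linarith
  -- nonemptiness with the sharper κ bound
  have hne : ∀ y ∈ closedBall ybar β, ∃ w, w ∈ A y ∧ ‖w - xbar‖ ≤ κ * ‖y - ybar‖ := by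
    intro y hy
    have hyb : y ∈ ball ybar ε := by
      rw [mem_ball]
      exact lt_of_le_of_lt (mem_closedBall.mp hy) hβε
    obtain ⟨z, hz, hzb⟩ := haubin y hyb ybar (mem_ball_self hε) xbar ⟨hmem, mem_ball_self hε⟩
    refine ⟨z, hz, ?_⟩
    calc ‖z - xbar‖ = ‖xbar - z‖ := by rw [norm_sub_rev]
      _ ≤ κ * ‖ybar - y‖ := hzb
      _ = κ * ‖y - ybar‖ := by rw [norm_sub_rev]
  have hMeq : ∀ y ∈ closedBall ybar β,
      {x ∈ A y | ‖x - xbar‖ ≤ α * ‖y - ybar‖}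
        = (A y ∩ closedBall xbar c) ∩ closedBall xbar (α * ‖y - ybar‖) := by
    intro y hy
    ext u
    simp only [Set.mem_setOf_eq, Set.mem_inter_iff, mem_closedBall, dist_eq_norm]
    constructor
    · rintro ⟨hu, hub⟩
      have hyd : ‖y - ybar‖ ≤ β := by rw [← dist_eq_norm]; exact mem_closedBall.mp hy
      refine ⟨⟨hu, ?_⟩, hub⟩
      calc ‖u - xbar‖ ≤ α * ‖y - ybar‖ := hub
        _ ≤ α * β := mul_le_mul_of_nonneg_left hyd hα0.le
        _ ≤ c := hαβc
    · rintro ⟨⟨hu, _⟩, hub⟩; exact ⟨hu, hub⟩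
  refine ⟨β, hβ, ?_, ?_⟩
  · intro y hy
    have hyc : y ∈ closedBall ybar c := closedBall_subset_closedBall hβc hy
    refine ⟨?_, ?_, ?_⟩
    · obtain ⟨w, hw, hwb⟩ := hne y hy
      exact ⟨w, hw, hwb.trans (mul_le_mul_of_nonneg_right hα.le (norm_nonneg _))⟩
    · rw [hMeq y hy]
      exact ((hcc y hyc).2).inter Metric.isClosed_closedBall
    · rw [hMeq y hy]
      exact ((hcc y hyc).1).inter (convex_closedBall _ _)
  · intro y hy x hx yk hyk hconv
    have hyd : ‖y - ybar‖ ≤ β := by rw [← dist_eq_norm]; exact mem_closedBall.mp hy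
    have hykd : ∀ k, ‖yk k - ybar‖ ≤ β := fun k => by
      rw [← dist_eq_norm]; exact mem_closedBall.mp (hyk k)
    have hyk0 : Tendsto (fun k => ‖yk k - y‖) atTop (nhds 0) :=
      tendsto_iff_norm_sub_tendsto_zero.mp hconv
    by_cases hyy : y = ybar
    · subst hyy
      have hx0 : x = xbar := by
        have h2 := hx.2
        simp only [sub_self, norm_zero, mul_zero] at h2
        have h3 : x - xbar = 0 := norm_le_zero_iff.mp h2
        exact sub_eq_zero.mp h3
      choose w hwA hwb using fun k => hne (yk k) (hyk k)
      refine ⟨w, fun k => ⟨hwA k, (hwb k).trans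
        (mul_le_mul_of_nonneg_right hα.le (norm_nonneg _))⟩, ?_⟩
      rw [hx0, tendsto_iff_norm_sub_tendsto_zero]
      have hg : Tendsto (fun k => κ * ‖yk k - y‖) atTop (nhds 0) := by
        have := hyk0.const_mul κ
        simpa using this
      exact squeeze_zero (fun k => norm_nonneg _) (fun k => hwb k) hg
    · have hδ : 0 < ‖y - ybar‖ := by
        rw [norm_pos_iff, sub_ne_zero]; exact hyy
      have hxb : ‖x - xbar‖ ≤ α * β := by
        calc ‖x - xbar‖ ≤ α * ‖y - ybar‖ := hx.2
          _ ≤ α * β := mul_le_mul_of_nonneg_left hyd hα0.le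
      have hxball : x ∈ ball xbar ε := by
        rw [mem_ball, dist_eq_norm]; exact lt_of_le_of_lt hxb hαβε
      have hyball : y ∈ ball ybar ε := by
        rw [mem_ball]; exact lt_of_le_of_lt (mem_closedBall.mp hy) hβε
      have hykball : ∀ k, yk k ∈ ball ybar ε := fun k => by
        rw [mem_ball]; exact lt_of_le_of_lt (mem_closedBall.mp (hyk k)) hβε
      choose z hzA hzb using fun k => haubin (yk k) (hykball k) y hyball x ⟨hx.1, hxball⟩
      choose w hwA hwb using fun k => hne (yk k) (hyk k)
      have hyyk : ∀ k, ‖y - yk k‖ ≤ 2 * β := fun k => by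
        calc ‖y - yk k‖ = ‖(y - ybar) + (ybar - yk k)‖ := by rw [sub_add_sub_cancel]
          _ ≤ ‖y - ybar‖ + ‖ybar - yk k‖ := norm_add_le _ _
          _ = ‖y - ybar‖ + ‖yk k - ybar‖ := by rw [norm_sub_rev ybar]
          _ ≤ 2 * β := by linarith [hykd k]
      have hzc : ∀ k, ‖z k - xbar‖ ≤ (2*κ + α) * β := fun k => by
        have h1 : ‖x - z k‖ ≤ κ * (2 * β) :=
          (hzb k).trans (mul_le_mul_of_nonneg_left (hyyk k) hκ.le)
        have h2 : ‖z k - xbar‖ ≤ ‖z k - x‖ + ‖x - xbar‖ := by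
          calc ‖z k - xbar‖ = ‖(z k - x) + (x - xbar)‖ := by rw [sub_add_sub_cancel]
            _ ≤ ‖z k - x‖ + ‖x - xbar‖ := norm_add_le _ _
        have h3 : ‖z k - x‖ = ‖x - z k‖ := norm_sub_rev _ _
        nlinarith
      have hwc : ∀ k, ‖w k - xbar‖ ≤ κ * β := fun k =>
        (hwb k).trans (mul_le_mul_of_nonneg_left (hykd k) hκ.le)
      have hzm : ∀ k, z k ∈ A (yk k) ∩ closedBall xbar c := fun k =>
        ⟨hzA k, by rw [mem_closedBall, dist_eq_norm]; linarith [hzc k]⟩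
      have hwm : ∀ k, w k ∈ A (yk k) ∩ closedBall xbar c := fun k =>
        ⟨hwA k, by rw [mem_closedBall, dist_eq_norm]; linarith [hwc k]⟩
      have hqr : ∀ k, κ * ‖yk k - ybar‖ ≤ α * ‖yk k - ybar‖ := fun k =>
        mul_le_mul_of_nonneg_right hα.le (norm_nonneg _)
      have hδ2 : 0 < (α - κ) * ‖y - ybar‖ / 2 := by
        have h1 : 0 < α - κ := by linarith
        positivity
      have hT : ∀ k, ∃ tk : ℝ, 0 ≤ tk ∧ tk ≤ 1 ∧
          ‖(1 - tk) • z k + tk • w k - xbar‖ ≤ α * ‖yk k - ybar‖ ∧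
          (‖yk k - y‖ ≤ ‖y - ybar‖ / 2 →
            tk ≤ ((κ + α) / ((α - κ) * ‖y - ybar‖ / 2)) * ‖yk k - y‖) := by
        intro k
        by_cases h : ‖z k - xbar‖ ≤ α * ‖yk k - ybar‖
        · refine ⟨0, le_refl _, zero_le_one, ?_, fun _ => by positivity⟩
          simpa using h
        · push_neg at h
          have hq := hqr k
          have hdenk : 0 < ‖z k - xbar‖ - κ * ‖yk k - ybar‖ := by linarith
          set tk : ℝ := (‖z k - xbar‖ - α * ‖yk k - ybar‖) /
            (‖z k - xbar‖ - κ * ‖yk k - ybar‖) with htkdef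
          have ht0 : 0 ≤ tk := div_nonneg (by linarith) hdenk.le
          have ht1 : tk ≤ 1 := by rw [htkdef, div_le_one hdenk]; linarith
          refine ⟨tk, ht0, ht1, ?_, ?_⟩
          · have hid : (1 - tk) • z k + tk • w k - xbar
                = (1 - tk) • (z k - xbar) + tk • (w k - xbar) := by module
            rw [hid]
            calc ‖(1 - tk) • (z k - xbar) + tk • (w k - xbar)‖
                ≤ ‖(1 - tk) • (z k - xbar)‖ + ‖tk • (w k - xbar)‖ := norm_add_le _ _
              _ = (1 - tk) * ‖z k - xbar‖ + tk * ‖w k - xbar‖ := by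
                  rw [norm_smul, norm_smul,
                    Real.norm_of_nonneg (by linarith : (0:ℝ) ≤ 1 - tk),
                    Real.norm_of_nonneg ht0]
              _ ≤ (1 - tk) * ‖z k - xbar‖ + tk * (κ * ‖yk k - ybar‖) := by
                  have := mul_le_mul_of_nonneg_left (hwb k) ht0
                  linarith
              _ = ‖z k - xbar‖ - tk * (‖z k - xbar‖ - κ * ‖yk k - ybar‖) := by ring
              _ = α * ‖yk k - ybar‖ := by
                  rw [htkdef, div_mul_cancel₀ _ hdenk.ne']; ring
          · intro hk
            have hnum : ‖z k - xbar‖ - α * ‖yk k - ybar‖ ≤ (κ + α) * ‖y - yk k‖ := by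
              have h1 : ‖z k - xbar‖ ≤ ‖z k - x‖ + ‖x - xbar‖ := by
                calc ‖z k - xbar‖ = ‖(z k - x) + (x - xbar)‖ := by rw [sub_add_sub_cancel]
                  _ ≤ ‖z k - x‖ + ‖x - xbar‖ := norm_add_le _ _
              have h2 : ‖z k - x‖ = ‖x - z k‖ := norm_sub_rev _ _
              have h3 : ‖y - ybar‖ ≤ ‖y - yk k‖ + ‖yk k - ybar‖ := by
                calc ‖y - ybar‖ = ‖(y - yk k) + (yk k - ybar)‖ := by rw [sub_add_sub_cancel]
                  _ ≤ ‖y - yk k‖ + ‖yk k - ybar‖ := norm_add_le _ _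
              have h4 := hzb k
              have h5 : α * ‖y - ybar‖ ≤ α * (‖y - yk k‖ + ‖yk k - ybar‖) :=
                mul_le_mul_of_nonneg_left h3 hα0.le
              have h6 := hx.2
              nlinarith
            have hden2 : (α - κ) * ‖y - ybar‖ / 2
                ≤ ‖z k - xbar‖ - κ * ‖yk k - ybar‖ := by
              have h6 : ‖y - ybar‖ / 2 ≤ ‖yk k - ybar‖ := by
                have h5 : ‖y - ybar‖ ≤ ‖y - yk k‖ + ‖yk k - ybar‖ := by
                  calc ‖y - ybar‖ = ‖(y - yk k) + (yk k - ybar)‖ := by rw [sub_add_sub_cancel]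
                    _ ≤ ‖y - yk k‖ + ‖yk k - ybar‖ := norm_add_le _ _
                have h7 : ‖y - yk k‖ = ‖yk k - y‖ := norm_sub_rev _ _
                linarith
              have h8 : (α - κ) * (‖y - ybar‖ / 2) ≤ (α - κ) * ‖yk k - ybar‖ :=
                mul_le_mul_of_nonneg_left h6 (by linarith)
              have h9 : (α - κ) * ‖yk k - ybar‖
                  = α * ‖yk k - ybar‖ - κ * ‖yk k - ybar‖ := by ring
              linarith
            have hnn : (0:ℝ) ≤ (κ + α) * ‖y - yk k‖ := by positivity
            have h10 : tk ≤ ((κ + α) * ‖y - yk k‖) / ((α - κ) * ‖y - ybar‖ / 2) := by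
              rw [htkdef]
              exact div_le_div₀ hnn hnum hδ2 hden2
            calc tk ≤ ((κ + α) * ‖y - yk k‖) / ((α - κ) * ‖y - ybar‖ / 2) := h10
              _ = ((κ + α) / ((α - κ) * ‖y - ybar‖ / 2)) * ‖yk k - y‖ := by
                  rw [norm_sub_rev]; ring
      choose t ht0 ht1 htb htsm using hT
      have hccy : ∀ k, Convex ℝ (A (yk k) ∩ closedBall xbar c) := fun k =>
        (hcc (yk k) (closedBall_subset_closedBall hβc (hyk k))).1
      have hx'A : ∀ k, (1 - t k) • z k + t k • w k ∈ A (yk k) ∩ closedBall xbar c := fun k =>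
        (hccy k) (hzm k) (hwm k) (by linarith [ht1 k]) (ht0 k) (by ring)
      have hev : ∀ᶠ k in atTop, ‖yk k - y‖ ≤ ‖y - ybar‖ / 2 :=
        hyk0.eventually (eventually_le_nhds (half_pos hδ))
      have htC : Tendsto t atTop (nhds 0) := by
        apply squeeze_zero' (Filter.Eventually.of_forall ht0)
          (g := fun k => ((κ + α) / ((α - κ) * ‖y - ybar‖ / 2)) * ‖yk k - y‖)
        · filter_upwards [hev] with k hk
          exact htsm k hk
        · have := hyk0.const_mul ((κ + α) / ((α - κ) * ‖y - ybar‖ / 2))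
          simpa using this
      refine ⟨fun k => (1 - t k) • z k + t k • w k,
        fun k => ⟨(hx'A k).1, htb k⟩, ?_⟩
      rw [tendsto_iff_norm_sub_tendsto_zero]
      have hbound : ∀ k, ‖(1 - t k) • z k + t k • w k - x‖
          ≤ κ * ‖y - yk k‖ + t k * ((3*κ + α) * β) := fun k => by
        have hid2 : (1 - t k) • z k + t k • w k - x = (z k - x) + t k • (w k - z k) := by
          module
        have hwz : ‖w k - z k‖ ≤ (3*κ + α) * β := by
          calc ‖w k - z k‖ = ‖(w k - xbar) + (xbar - z k)‖ := by rw [sub_add_sub_cancel]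
            _ ≤ ‖w k - xbar‖ + ‖xbar - z k‖ := norm_add_le _ _
            _ = ‖w k - xbar‖ + ‖z k - xbar‖ := by rw [norm_sub_rev xbar]
            _ ≤ (3*κ + α) * β := by nlinarith [hwc k, hzc k]
        have h0 := ht0 k
        calc ‖(1 - t k) • z k + t k • w k - x‖
            = ‖(z k - x) + t k • (w k - z k)‖ := by rw [hid2]
          _ ≤ ‖z k - x‖ + ‖t k • (w k - z k)‖ := norm_add_le _ _
          _ = ‖z k - x‖ + t k * ‖w k - z k‖ := by
              rw [norm_smul, Real.norm_of_nonneg h0]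
          _ ≤ κ * ‖y - yk k‖ + t k * ((3*κ + α) * β) := by
              have h1 : ‖z k - x‖ = ‖x - z k‖ := norm_sub_rev _ _
              have h2 := mul_le_mul_of_nonneg_left hwz h0
              linarith [hzb k]
      apply squeeze_zero (fun k => norm_nonneg _) hbound
      have hg1 : Tendsto (fun k => κ * ‖y - yk k‖) atTop (nhds 0) := by
        have h1 : Tendsto (fun k => ‖y - yk k‖) atTop (nhds 0) := by
          simpa [norm_sub_rev] using hyk0
        have := h1.const_mul κ
        simpa using this
      have hg2 : Tendsto (fun k => t k * ((3*κ + α) * β)) atTop (nhds 0) := by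
        have := htC.mul_const ((3*κ + α) * β)
        simpa using this
      have := hg1.add hg2
      simpa using this
end

section
/- Let X and Y be Banach spaces, let F : X ⇒ Y be a set-valued mapping with (x̄, ȳ) ∈ gph F, and suppose F is metrically regular at x̄ for ȳ, i.e. reg F(x̄|ȳ) < ∞. Suppose for some c > 0 the sets F⁻¹(y) ∩ B_c(x̄) are convex and closed for all y ∈ B_c(ȳ). Then F⁻¹ has a continuous local selection x(·) around (ȳ, x̄): there exist neighborhoods V of ȳ and U of x̄ and a continuous function x : V → U with x(ȳ) = x̄ and x(y) ∈ F⁻¹(y) for all y ∈ V, which moreover is calm at ȳ with clm x(ȳ) ≤ reg F(x̄|ȳ). -/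
/-!
If `κ` is a constant of metric regularity, then `d(xbar, F⁻¹ y) ≤ κ ‖y - ybar‖`, and
`y ↦ F⁻¹ y ∩ B(xbar, r y)` is lower semicontinuous whenever `r` is. Taking
`r y = d(xbar, F⁻¹ y) + ‖y - ybar‖²`, these sets are nonempty for `y ≠ ybar`, so their closures,
together with `{xbar}` at `ybar`, form a lower semicontinuous map with nonempty closed convex
values near `ybar`. Michael's selection theorem (successive approximation by partitions of unity)
gives a continuous selection `s`, and `‖s y - xbar‖ ≤ r y ≤ κ' ‖y - ybar‖ + ‖y - ybar‖²` for every
regularity constant `κ'`, which is the calmness bound.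
-/

open Metric Filter

/-- The modulus of metric regularity `reg F(xbar|ybar)` of a set-valued mapping
`F : X ⇒ Y` at `xbar` for `ybar`: the infimum of constants `κ` such that
`d(x, F⁻¹(y)) ≤ κ d(y, F(x))` for all `(x, y)` near `(xbar, ybar)` (value `⊤` if no
such constant exists, so metric regularity means `regModulus F xbar ybar < ⊤`). -/
noncomputable def regModulus {X Y : Type*} [NormedAddCommGroup X] [NormedAddCommGroup Y]
    (F : X → Set Y) (xbar : X) (ybar : Y) : ENNReal :=
  ⨅ (κ : NNReal) (_ : ∃ ε > (0 : ℝ), ∀ x ∈ ball xbar ε, ∀ y ∈ ball ybar ε,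
      EMetric.infEdist x {x' | y ∈ F x'} ≤ (κ : ENNReal) * EMetric.infEdist y (F x)),
    (κ : ENNReal)

/-- The modulus of calmness `clm s(ybar)` of a function `s : Y → X` at `ybar`: the infimum
of constants `γ` such that `‖s y - s ybar‖ ≤ γ‖y - ybar‖` for all `y` near `ybar`. -/
noncomputable def clmModulus {X Y : Type*} [NormedAddCommGroup X] [NormedAddCommGroup Y]
    (s : Y → X) (ybar : Y) : ENNReal :=
  ⨅ (γ : NNReal) (_ : ∃ ε > (0 : ℝ), ∀ y ∈ ball ybar ε,
      ‖s y - s ybar‖ ≤ (γ : ℝ) * ‖y - ybar‖), (γ : ENNReal)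

open Set Topology
open scoped ENNReal NNReal

section LowerHemicontinuity

variable {α X : Type*} [TopologicalSpace α] {Φ Ψ : α → Set X} {a : α}

theorem LowerHemicontinuousAt.congr [TopologicalSpace X] (hΦ : LowerHemicontinuousAt Φ a)
    (h : Φ =ᶠ[𝓝 a] Ψ) : LowerHemicontinuousAt Ψ a := by
  rw [← lowerHemicontinuousWithinAt_univ_iff] at hΦ ⊢
  exact hΦ.congr_of_eventuallyEq (mem_univ a) (by rwa [nhdsWithin_univ])

theorem LowerHemicontinuousAt.closure [TopologicalSpace X] (hΦ : LowerHemicontinuousAt Φ a) :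
    LowerHemicontinuousAt (fun a => closure (Φ a)) a := by
  rw [lowerHemicontinuousAt_iff] at hΦ ⊢
  intro u hu hmeet
  filter_upwards [hΦ u hu ((closure_inter_open_nonempty_iff hu).1 hmeet)] with a' ha'
  exact ha'.mono (inter_subset_inter_left _ subset_closure)

theorem lowerHemicontinuousAt_iff_forall_mem_thickening [PseudoMetricSpace X] :
    LowerHemicontinuousAt Φ a ↔ ∀ z ∈ Φ a, ∀ δ > 0, ∀ᶠ a' in 𝓝 a, z ∈ thickening δ (Φ a') := by
  rw [lowerHemicontinuousAt_iff]
  constructor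
  · intro hΦ z hz δ hδ
    filter_upwards [hΦ (ball z δ) isOpen_ball ⟨z, hz, mem_ball_self hδ⟩] with a' ⟨w, hw, hwz⟩
    exact mem_thickening_iff.2 ⟨w, hw, by rwa [dist_comm]⟩
  · rintro hΦ u hu ⟨z, hz, hzu⟩
    obtain ⟨δ, hδ, hzδ⟩ := Metric.isOpen_iff.1 hu z hzu
    filter_upwards [hΦ z hz δ hδ] with a' ha'
    obtain ⟨w, hw, hzw⟩ := mem_thickening_iff.1 ha'
    exact ⟨w, hw, hzδ (by rwa [mem_ball, dist_comm])⟩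

end LowerHemicontinuity

theorem exists_tendstoUniformly_of_dist_le_geometric {β X : Type*} [PseudoMetricSpace X]
    [CompleteSpace X] {u : ℕ → β → X} {C r : ℝ} (hr₀ : 0 ≤ r) (hr : r < 1)
    (hu : ∀ n b, dist (u n b) (u (n + 1) b) ≤ C * r ^ n) :
    ∃ s : β → X, TendstoUniformly u s atTop := by
  have hedist : ∀ n, edist (UniformFun.ofFun (u n)) (UniformFun.ofFun (u (n + 1))) ≤
      ENNReal.ofReal C * ENNReal.ofReal r ^ n := fun n =>
    UniformFun.edist_le.2 fun b => by
      rw [edist_dist, ← ENNReal.ofReal_pow hr₀, ← ENNReal.ofReal_mul' (by positivity)]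
      exact ENNReal.ofReal_le_ofReal (hu n b)
  obtain ⟨s, hs⟩ := cauchySeq_tendsto_of_complete <| cauchySeq_of_edist_le_geometric _ _
    (ENNReal.ofReal_lt_one.2 hr) ENNReal.ofReal_ne_top hedist
  exact ⟨UniformFun.toFun s, UniformFun.tendsto_iff_tendstoUniformly.1 hs⟩

section MichaelSelection

variable {α X : Type*} [TopologicalSpace α] [NormalSpace α] [ParacompactSpace α]
  [NormedAddCommGroup X] [NormedSpace ℝ X] {Φ : α → Set X}

theorem LowerHemicontinuous.exists_continuous_mem_thickening (hΦ : LowerHemicontinuous Φ)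
    (hne : ∀ a, (Φ a).Nonempty) (hconv : ∀ a, Convex ℝ (Φ a)) {δ : ℝ} (hδ : 0 < δ) :
    ∃ f : C(α, X), ∀ a, f a ∈ thickening δ (Φ a) :=
  exists_continuous_forall_mem_convex_of_local_const (fun a => (hconv a).thickening δ)
    fun a => ⟨(hne a).some,
      lowerHemicontinuousAt_iff_forall_mem_thickening.1 (hΦ a) _ (hne a).some_mem δ hδ⟩

theorem LowerHemicontinuous.exists_continuous_mem_thickening_near (hΦ : LowerHemicontinuous Φ)
    (hconv : ∀ a, Convex ℝ (Φ a)) (f : C(α, X)) {ε δ : ℝ}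
    (hf : ∀ a, f a ∈ thickening ε (Φ a)) (hδ : 0 < δ) :
    ∃ g : C(α, X), ∀ a, g a ∈ thickening δ (Φ a) ∩ ball (f a) (ε + δ) := by
  refine exists_continuous_forall_mem_convex_of_local_const
    (fun a => ((hconv a).thickening δ).inter (convex_ball _ _)) fun a => ?_
  obtain ⟨z, hz, hfz⟩ := mem_thickening_iff.1 (hf a)
  have hnear : ∀ᶠ a' in 𝓝 a, dist (f a') z < ε :=
    (f.continuous.dist continuous_const).continuousAt.eventually_lt continuousAt_const hfz
  refine ⟨z, ?_⟩
  filter_upwards [lowerHemicontinuousAt_iff_forall_mem_thickening.1 (hΦ a) z hz δ hδ, hnear]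
    with a' hza' hfza'
  exact ⟨hza', by rw [mem_ball, dist_comm]; linarith⟩

theorem LowerHemicontinuous.exists_continuous_selection [CompleteSpace X]
    (hΦ : LowerHemicontinuous Φ) (hne : ∀ a, (Φ a).Nonempty) (hconv : ∀ a, Convex ℝ (Φ a))
    (hclosed : ∀ a, IsClosed (Φ a)) :
    ∃ s : C(α, X), ∀ a, s a ∈ Φ a := by
  have step : ∀ (n : ℕ) (f : C(α, X)), (∀ a, f a ∈ thickening (2⁻¹ ^ n) (Φ a)) →
      ∃ g : C(α, X), (∀ a, g a ∈ thickening (2⁻¹ ^ (n + 1)) (Φ a)) ∧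
        ∀ a, dist (f a) (g a) ≤ 3 / 2 * 2⁻¹ ^ n := by
    intro n f hf
    obtain ⟨g, hg⟩ := hΦ.exists_continuous_mem_thickening_near hconv f hf
      (δ := 2⁻¹ ^ (n + 1)) (by positivity)
    refine ⟨g, fun a => (hg a).1, fun a => ?_⟩
    rw [dist_comm]
    linarith [mem_ball.1 (hg a).2, pow_succ (2⁻¹ : ℝ) n]
  choose! next hnext using step
  obtain ⟨f₀, hf₀⟩ := hΦ.exists_continuous_mem_thickening hne hconv (δ := 2⁻¹ ^ 0) (by positivity)
  let u : ℕ → C(α, X) := fun n => Nat.rec f₀ next n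
  have hu : ∀ n a, u n a ∈ thickening (2⁻¹ ^ n) (Φ a) := by
    intro n
    induction n with
    | zero => exact hf₀
    | succ n ih => exact (hnext n (u n) ih).1
  obtain ⟨s, hs⟩ := exists_tendstoUniformly_of_dist_le_geometric (u := fun n => u n)
    (by norm_num) (by norm_num) fun n => (hnext n (u n) (hu n)).2
  refine ⟨⟨s, hs.continuous (Frequently.of_forall fun n => (u n).continuous)⟩, fun a => ?_⟩
  rw [← (hclosed a).closure_eq, closure_eq_iInter_cthickening]
  refine mem_iInter₂.2 fun δ hδ => isClosed_cthickening.mem_of_tendsto (hs.tendsto_at a) ?_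
  filter_upwards [(tendsto_pow_atTop_nhds_zero_of_lt_one (by norm_num)
    (by norm_num : (2⁻¹ : ℝ) < 1)).eventually (gt_mem_nhds hδ)] with n hn
  exact thickening_subset_cthickening _ _ (thickening_mono hn.le _ (hu n a))

theorem exists_continuousOn_selection [CompleteSpace X] {Y : Type*} [TopologicalSpace Y]
    {V : Set Y} [NormalSpace V] [ParacompactSpace V] {Φ : Y → Set X}
    (hΦ : LowerHemicontinuousOn Φ V) (hne : ∀ y ∈ V, (Φ y).Nonempty)
    (hconv : ∀ y ∈ V, Convex ℝ (Φ y)) (hclosed : ∀ y ∈ V, IsClosed (Φ y)) :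
    ∃ s : Y → X, ContinuousOn s V ∧ ∀ y ∈ V, s y ∈ Φ y := by
  obtain ⟨s, hs⟩ := LowerHemicontinuous.exists_continuous_selection (Φ := fun y : V => Φ y)
    (lowerHemicontinuous_restrict_iff.2 hΦ)
    (fun y => hne y y.2) (fun y => hconv y y.2) (fun y => hclosed y y.2)
  have hext : ∀ y : V, Function.extend Subtype.val s 0 y = s y :=
    Subtype.val_injective.extend_apply _ _
  refine ⟨Function.extend Subtype.val s 0, ?_, fun y hy => hext ⟨y, hy⟩ ▸ hs ⟨y, hy⟩⟩
  rw [continuousOn_iff_continuous_domRestrict]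
  convert s.continuous using 1
  exact funext hext

end MichaelSelection

section MetricRegularity

variable {X Y : Type*} [PseudoMetricSpace X] [PseudoMetricSpace Y] {F : X → Set Y} {xbar : X}
  {ybar : Y} {κ : ℝ≥0} {ε : ℝ}

def MetricallyRegularWith (F : X → Set Y) (xbar : X) (ybar : Y) (κ : ℝ≥0) (ε : ℝ) : Prop :=
  ∀ x ∈ ball xbar ε, ∀ y ∈ ball ybar ε,
    infEDist x {x' | y ∈ F x'} ≤ (κ : ℝ≥0∞) * infEDist y (F x)

namespace MetricallyRegularWith

variable (h : MetricallyRegularWith F xbar ybar κ ε)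
include h

theorem exists_mem_dist_lt {x : X} {y v : Y} (hx : x ∈ ball xbar ε) (hy : y ∈ ball ybar ε)
    (hv : v ∈ F x) {δ : ℝ} (hδ : 0 < δ) : ∃ x', y ∈ F x' ∧ dist x' x < κ * dist y v + δ := by
  have hlt : infEDist x {x' | y ∈ F x'} < ENNReal.ofReal (κ * dist y v + δ) :=
    calc infEDist x {x' | y ∈ F x'} ≤ κ * edist y v :=
          (h x hx y hy).trans (mul_le_mul_right (infEDist_le_edist_of_mem hv) _)
      _ = ENNReal.ofReal (κ * dist y v) := by
          rw [edist_dist, ENNReal.ofReal_mul κ.coe_nonneg, ENNReal.ofReal_coe_nnreal]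
      _ < ENNReal.ofReal (κ * dist y v + δ) :=
          (ENNReal.ofReal_lt_ofReal_iff (by positivity)).2 (by linarith)
  obtain ⟨x', hx', hd⟩ := infEDist_lt_iff.1 hlt
  exact ⟨x', hx', by rw [dist_comm]; exact edist_lt_ofReal.1 hd⟩

variable (hmem : ybar ∈ F xbar)
include hmem

theorem preimage_nonempty {y : Y} (hy : y ∈ ball ybar ε) : {x | y ∈ F x}.Nonempty :=
  let ⟨x, hx, _⟩ := h.exists_mem_dist_lt (mem_ball_self (pos_of_mem_ball hy)) hy hmem one_pos
  ⟨x, hx⟩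

theorem infDist_le {y : Y} (hy : y ∈ ball ybar ε) :
    infDist xbar {x | y ∈ F x} ≤ κ * dist y ybar := by
  refine le_of_forall_pos_le_add fun δ hδ => ?_
  obtain ⟨x, hx, hd⟩ := h.exists_mem_dist_lt (mem_ball_self (pos_of_mem_ball hy)) hy hmem hδ
  exact (infDist_le_dist_of_mem (s := {x | y ∈ F x}) hx).trans ((dist_comm _ _).trans_le hd.le)

theorem infDist_le_infDist_add {y y' : Y} (hy : y ∈ ball ybar ε) (hy' : y' ∈ ball ybar ε)
    (hD : infDist xbar {x | y ∈ F x} < ε) :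
    infDist xbar {x | y' ∈ F x} ≤ infDist xbar {x | y ∈ F x} + κ * dist y' y := by
  refine le_of_forall_pos_le_add fun δ hδ => ?_
  set D := infDist xbar {x | y ∈ F x}
  obtain ⟨x, hx, hxd⟩ := (infDist_lt_iff (h.preimage_nonempty hmem hy)).1
    (show D < D + min (δ / 2) (ε - D) by have := lt_min (half_pos hδ) (sub_pos.2 hD); linarith)
  have hxε : x ∈ ball xbar ε := by
    rw [mem_ball, dist_comm]; linarith [min_le_right (δ / 2) (ε - D)]
  obtain ⟨x', hx', hd⟩ := h.exists_mem_dist_lt hxε hy' hx (half_pos hδ)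
  calc infDist xbar {x | y' ∈ F x} ≤ dist xbar x' := infDist_le_dist_of_mem hx'
    _ ≤ dist xbar x + dist x' x := by rw [dist_comm x' x]; exact dist_triangle _ _ _
    _ ≤ D + κ * dist y' y + δ := by linarith [min_le_left (δ / 2) (ε - D)]

theorem lipschitzOnWith_infDist {ρ : ℝ} (hρ : ρ ≤ ε) (hκρ : κ * ρ < ε) :
    LipschitzOnWith κ (fun y => infDist xbar {x | y ∈ F x}) (ball ybar ρ) :=
  LipschitzOnWith.of_le_add_mul κ fun _ hy' _ hy =>
    h.infDist_le_infDist_add hmem (ball_subset_ball hρ hy) (ball_subset_ball hρ hy') <|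
      (h.infDist_le hmem (ball_subset_ball hρ hy)).trans_lt <|
        (mul_le_mul_of_nonneg_left (mem_ball.1 hy).le κ.coe_nonneg).trans_lt hκρ

omit hmem

theorem lowerHemicontinuousAt_preimage_inter_ball {r : Y → ℝ} {y : Y} (hy : y ∈ ball ybar ε)
    (hr : LowerSemicontinuousAt r y) (hry : r y ≤ ε) :
    LowerHemicontinuousAt (fun y => {x | y ∈ F x} ∩ ball xbar (r y)) y := by
  rw [lowerHemicontinuousAt_iff_forall_mem_thickening]
  rintro z ⟨hzF, hzr⟩ δ hδ
  set η := min δ ((r y - dist z xbar) / 2)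
  have hη : 0 < η := lt_min hδ (by linarith [mem_ball.1 hzr])
  have hκ : ∀ᶠ y' in 𝓝 y, κ * dist y' y < η / 2 :=
    (continuous_const.mul (continuous_id.dist continuous_const)).continuousAt.eventually_lt
      continuousAt_const (by simpa using half_pos hη)
  filter_upwards [isOpen_ball.mem_nhds hy, hκ, hr _ (sub_lt_self _ hη)] with y' hy' hκy' hry'
  obtain ⟨x', hx', hd⟩ := h.exists_mem_dist_lt (ball_subset_ball hry hzr) hy' hzF (half_pos hη)
  have hx'z : dist x' z < η := by linarith
  have hηgap : η ≤ (r y - dist z xbar) / 2 := min_le_right _ _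
  refine mem_thickening_iff.2 ⟨x', ⟨hx', ?_⟩, ?_⟩
  · rw [mem_ball]
    linarith [dist_triangle x' z xbar]
  · rw [dist_comm]
    linarith [min_le_left δ ((r y - dist z xbar) / 2)]

end MetricallyRegularWith

end MetricRegularity

section Moduli

variable {X Y : Type*} [NormedAddCommGroup X] [NormedAddCommGroup Y] {F : X → Set Y} {xbar : X}
  {ybar : Y}

theorem exists_metricallyRegularWith_of_regModulus_lt_top (h : regModulus F xbar ybar < ⊤) :
    ∃ κ ε, 0 < ε ∧ MetricallyRegularWith F xbar ybar κ ε := by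
  obtain ⟨κ, hκ⟩ := iInf_lt_iff.1 h
  obtain ⟨⟨ε, hε, hκε⟩, -⟩ := iInf_lt_iff.1 hκ
  exact ⟨κ, ε, hε, hκε⟩

theorem le_regModulus {m : ℝ≥0∞}
    (h : ∀ κ ε, 0 < ε → MetricallyRegularWith F xbar ybar κ ε → m ≤ κ) :
    m ≤ regModulus F xbar ybar :=
  le_iInf₂ fun κ ⟨ε, hε, hκ⟩ => h κ ε hε hκ

theorem clmModulus_le_of_eventually {s : Y → X} {γ : ℝ≥0}
    (h : ∀ᶠ y in 𝓝 ybar, ‖s y - s ybar‖ ≤ γ * ‖y - ybar‖) : clmModulus s ybar ≤ γ :=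
  iInf₂_le γ (Metric.eventually_nhds_iff_ball.1 h)

theorem clmModulus_le_of_isLittleO {s : Y → X} {γ : ℝ≥0} {g : Y → ℝ}
    (h : ∀ᶠ y in 𝓝 ybar, ‖s y - s ybar‖ ≤ γ * ‖y - ybar‖ + g y)
    (hg : g =o[𝓝 ybar] fun y => y - ybar) : clmModulus s ybar ≤ γ := by
  refine ENNReal.le_of_forall_pos_le_add fun η hη _ => ?_
  rw [← ENNReal.coe_add]
  refine clmModulus_le_of_eventually ?_
  filter_upwards [h, hg.bound (NNReal.coe_pos.2 hη)] with y hy hgy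
  rw [Real.norm_eq_abs] at hgy
  push_cast
  linarith [le_abs_self (g y)]

end Moduli

section LocalSelection

variable {X Y : Type*} [MetricSpace X] [MetricSpace Y] {F : X → Set Y}
  {xbar : X} {ybar y : Y} {κ : ℝ≥0} {ε : ℝ}

/-- The square keeps the radius strictly above `d(xbar, F⁻¹ y)` for `y ≠ ybar`, so that the
ball meets `F⁻¹ y`, and is negligible for calmness at `ybar`. -/
noncomputable def selectionRadius (F : X → Set Y) (xbar : X) (ybar y : Y) : ℝ :=
  infDist xbar {x | y ∈ F x} + dist y ybar ^ 2

open Classical in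
noncomputable def localSelectionMap (F : X → Set Y) (xbar : X) (ybar y : Y) : Set X :=
  if y = ybar then {xbar}
  else closure ({x | y ∈ F x} ∩ ball xbar (selectionRadius F xbar ybar y))

theorem selectionRadius_self (hmem : ybar ∈ F xbar) : selectionRadius F xbar ybar ybar = 0 := by
  simp [selectionRadius, infDist_zero_of_mem (show xbar ∈ {x | ybar ∈ F x} from hmem)]

theorem localSelectionMap_self : localSelectionMap F xbar ybar ybar = {xbar} :=
  if_pos rfl

theorem localSelectionMap_of_ne (hy : y ≠ ybar) : localSelectionMap F xbar ybar y =
    closure ({x | y ∈ F x} ∩ ball xbar (selectionRadius F xbar ybar y)) :=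
  if_neg hy

theorem isClosed_localSelectionMap : IsClosed (localSelectionMap F xbar ybar y) := by
  unfold localSelectionMap
  split_ifs
  exacts [isClosed_singleton, isClosed_closure]

theorem localSelectionMap_subset_closedBall :
    localSelectionMap F xbar ybar y ⊆ closedBall xbar (selectionRadius F xbar ybar y) := by
  rcases eq_or_ne y ybar with rfl | hy
  · rw [localSelectionMap_self, singleton_subset_iff]
    exact mem_closedBall_self (add_nonneg infDist_nonneg (sq_nonneg _))
  · rw [localSelectionMap_of_ne hy]
    exact closure_minimal (inter_subset_right.trans ball_subset_closedBall) isClosed_closedBall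

theorem localSelectionMap_subset_preimage (hmem : ybar ∈ F xbar) {c : ℝ}
    (hclosed : IsClosed ({x | y ∈ F x} ∩ closedBall xbar c))
    (hrc : selectionRadius F xbar ybar y ≤ c) :
    localSelectionMap F xbar ybar y ⊆ {x | y ∈ F x} := by
  rcases eq_or_ne y ybar with rfl | hy
  · rw [localSelectionMap_self, singleton_subset_iff]
    exact hmem
  · rw [localSelectionMap_of_ne hy]
    refine (closure_minimal (inter_subset_inter_right _ ?_) hclosed).trans inter_subset_left
    exact ball_subset_closedBall.trans (closedBall_subset_closedBall hrc)

namespace MetricallyRegularWith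

variable (h : MetricallyRegularWith F xbar ybar κ ε) (hmem : ybar ∈ F xbar)
include h hmem

theorem continuousOn_selectionRadius {ρ : ℝ} (hρ : ρ ≤ ε) (hκρ : κ * ρ < ε) :
    ContinuousOn (selectionRadius F xbar ybar) (ball ybar ρ) :=
  (h.lipschitzOnWith_infDist hmem hρ hκρ).continuousOn.add
    ((continuous_id.dist continuous_const).pow 2).continuousOn

theorem selectionRadius_le_of_mem_ball {ρ : ℝ} (hρ1 : ρ ≤ 1) (hρε : (κ + 1) * ρ ≤ ε)
    (hy : y ∈ ball ybar ρ) : selectionRadius F xbar ybar y ≤ (κ + 1) * ρ := by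
  have hd := mem_ball.1 hy
  have hyε : y ∈ ball ybar ε := ball_subset_ball
    ((le_mul_of_one_le_left (pos_of_mem_ball hy).le (by simp)).trans hρε) hy
  have hD := h.infDist_le hmem hyε
  unfold selectionRadius
  nlinarith [dist_nonneg (x := y) (y := ybar), κ.coe_nonneg]

theorem localSelectionMap_nonempty (hy : y ∈ ball ybar ε) :
    (localSelectionMap F xbar ybar y).Nonempty := by
  rcases eq_or_ne y ybar with rfl | hne
  · rw [localSelectionMap_self]
    exact singleton_nonempty _
  · rw [localSelectionMap_of_ne hne]
    have hr : infDist xbar {x | y ∈ F x} < selectionRadius F xbar ybar y :=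
      lt_add_of_pos_right _ (pow_pos (dist_pos.2 hne) 2)
    obtain ⟨x, hx, hdx⟩ := (infDist_lt_iff (h.preimage_nonempty hmem hy)).1 hr
    exact ⟨x, subset_closure ⟨hx, mem_ball_comm.1 hdx⟩⟩

theorem lowerHemicontinuousAt_localSelectionMap {ρ : ℝ} (hρ1 : ρ ≤ 1) (hρε : (κ + 1) * ρ ≤ ε)
    (hy : y ∈ ball ybar ρ) : LowerHemicontinuousAt (localSelectionMap F xbar ybar) y := by
  have hρ : 0 < ρ := pos_of_mem_ball hy
  have hρε' : ρ ≤ ε := (le_mul_of_one_le_left hρ.le (by simp)).trans hρε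
  have hr : ContinuousAt (selectionRadius F xbar ybar) y :=
    (h.continuousOn_selectionRadius hmem hρε' (by nlinarith)).continuousAt
      (isOpen_ball.mem_nhds hy)
  rcases eq_or_ne ybar y with rfl | hne
  · rw [lowerHemicontinuousAt_iff_forall_mem_thickening, localSelectionMap_self]
    intro z hz δ hδ
    rw [mem_singleton_iff.1 hz]
    have hrδ : ∀ᶠ y' in 𝓝 ybar, selectionRadius F xbar ybar y' < δ :=
      hr.eventually_lt continuousAt_const (by rwa [selectionRadius_self hmem])
    filter_upwards [hrδ, isOpen_ball.mem_nhds hy] with y' hry' hy'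
    obtain ⟨x, hx⟩ := h.localSelectionMap_nonempty hmem (ball_subset_ball hρε' hy')
    exact mem_thickening_iff.2
      ⟨x, hx, (mem_closedBall_comm.1 (localSelectionMap_subset_closedBall hx)).trans_lt hry'⟩
  · have hry := (h.selectionRadius_le_of_mem_ball hmem hρ1 hρε hy).trans hρε
    refine ((h.lowerHemicontinuousAt_preimage_inter_ball (ball_subset_ball hρε' hy)
      hr.lowerSemicontinuousAt hry).closure).congr ?_
    filter_upwards [eventually_ne_nhds hne.symm] with y' hy'
    exact (localSelectionMap_of_ne hy').symm

end MetricallyRegularWith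

end LocalSelection

theorem convex_localSelectionMap {X Y : Type*} [NormedAddCommGroup X] [NormedSpace ℝ X]
    [MetricSpace Y] {F : X → Set Y} {xbar : X} {ybar y : Y} {c : ℝ}
    (hconv : Convex ℝ ({x | y ∈ F x} ∩ closedBall xbar c))
    (hrc : selectionRadius F xbar ybar y ≤ c) : Convex ℝ (localSelectionMap F xbar ybar y) := by
  rcases eq_or_ne y ybar with rfl | hy
  · rw [localSelectionMap_self]
    exact convex_singleton _
  · rw [localSelectionMap_of_ne hy, ← inter_eq_right.2
      (ball_subset_closedBall.trans (closedBall_subset_closedBall hrc)), ← inter_assoc]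
    exact (hconv.inter (convex_ball _ _)).closure

theorem clmModulus_le_regModulus_of_eventually_mem_localSelectionMap {X Y : Type*}
    [NormedAddCommGroup X] [NormedAddCommGroup Y] {F : X → Set Y} {xbar : X} {ybar : Y}
    (hmem : ybar ∈ F xbar) {s : Y → X} (hs : s ybar = xbar)
    (hsΦ : ∀ᶠ y in 𝓝 ybar, s y ∈ localSelectionMap F xbar ybar y) :
    clmModulus s ybar ≤ regModulus F xbar ybar := by
  refine le_regModulus fun κ ε hε h =>
    clmModulus_le_of_isLittleO ?_ (Asymptotics.isLittleO_pow_sub_sub ybar one_lt_two)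
  filter_upwards [hsΦ, ball_mem_nhds ybar hε] with y hy hyε
  calc ‖s y - s ybar‖ = dist (s y) xbar := by rw [hs, dist_eq_norm]
    _ ≤ selectionRadius F xbar ybar y := localSelectionMap_subset_closedBall hy
    _ ≤ κ * ‖y - ybar‖ + ‖y - ybar‖ ^ 2 := by
      rw [selectionRadius, ← dist_eq_norm]
      gcongr
      exact h.infDist_le hmem hyε

theorem inverse_has_continuous_calm_local_selection_general
    {X Y : Type*} [NormedAddCommGroup X] [NormedSpace ℝ X] [CompleteSpace X]
    [NormedAddCommGroup Y]
    (F : X → Set Y) (xbar : X) (ybar : Y) (hmem : ybar ∈ F xbar)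
    (hreg : regModulus F xbar ybar < ⊤)
    (c : ℝ) (hc : 0 < c)
    (hcc : ∀ y ∈ closedBall ybar c,
      Convex ℝ ({x | y ∈ F x} ∩ closedBall xbar c) ∧
      IsClosed ({x | y ∈ F x} ∩ closedBall xbar c)) :
    ∃ V ∈ nhds ybar, ∃ U ∈ nhds xbar, ∃ s : Y → X,
      ContinuousOn s V ∧ s ybar = xbar ∧
      (∀ y ∈ V, s y ∈ U ∧ y ∈ F (s y)) ∧
      clmModulus s ybar ≤ regModulus F xbar ybar := by
  obtain ⟨κ, ε, hε, hκ⟩ := exists_metricallyRegularWith_of_regModulus_lt_top hreg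
  set ρ := min 1 (min ε c) / (κ + 1)
  have hκ1 : (1 : ℝ) ≤ κ + 1 := le_add_of_nonneg_left κ.coe_nonneg
  have hρ : 0 < ρ := div_pos (lt_min one_pos (lt_min hε hc)) (by positivity)
  have hρm : (κ + 1) * ρ = min 1 (min ε c) := mul_div_cancel₀ _ (by positivity)
  have hρ_le : ρ ≤ (κ + 1) * ρ := le_mul_of_one_le_left hρ.le hκ1
  have hρ1 : ρ ≤ 1 := hρ_le.trans (hρm ▸ min_le_left _ _)
  have hρε : (κ + 1) * ρ ≤ ε := hρm ▸ (min_le_right _ _).trans (min_le_left _ _)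
  have hρc : (κ + 1) * ρ ≤ c := hρm ▸ (min_le_right _ _).trans (min_le_right _ _)
  have hrc : ∀ y ∈ ball ybar ρ, selectionRadius F xbar ybar y ≤ c := fun y hy =>
    (hκ.selectionRadius_le_of_mem_ball hmem hρ1 hρε hy).trans hρc
  have hyc : ∀ y ∈ ball ybar ρ, y ∈ closedBall ybar c := fun y hy =>
    mem_closedBall.2 ((mem_ball.1 hy).le.trans (hρ_le.trans hρc))
  obtain ⟨s, hs_cont, hs⟩ := exists_continuousOn_selection (V := ball ybar ρ)
    (fun y hy =>
      (hκ.lowerHemicontinuousAt_localSelectionMap hmem hρ1 hρε hy).lowerHemicontinuousWithinAt _)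
    (fun y hy => hκ.localSelectionMap_nonempty hmem (ball_subset_ball (hρ_le.trans hρε) hy))
    (fun y hy => convex_localSelectionMap (hcc y (hyc y hy)).1 (hrc y hy))
    fun _ _ => isClosed_localSelectionMap
  have hs_bar : s ybar = xbar := by
    simpa [localSelectionMap_self] using hs ybar (mem_ball_self hρ)
  refine ⟨ball ybar ρ, ball_mem_nhds _ hρ, closedBall xbar c, closedBall_mem_nhds _ hc, s, hs_cont,
    hs_bar, fun y hy => ⟨?_, ?_⟩, clmModulus_le_regModulus_of_eventually_mem_localSelectionMap hmem
      hs_bar (eventually_of_mem (ball_mem_nhds _ hρ) hs)⟩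
  · exact closedBall_subset_closedBall (hrc y hy) (localSelectionMap_subset_closedBall (hs y hy))
  · exact localSelectionMap_subset_preimage hmem (hcc y (hyc y hy)).2 (hrc y hy) (hs y hy)

/-- Theorem 2.2: if `F : X ⇒ Y` is metrically regular at `xbar` for `ybar` and the sets
`F⁻¹(y) ∩ B_c(xbar)` are convex and closed for `y ∈ B_c(ybar)`, then `F⁻¹` has a
continuous local selection around `(ybar, xbar)` which is calm at `ybar` with calmness
modulus at most `reg F(xbar|ybar)`. -/
theorem inverse_has_continuous_calm_local_selection
    {X Y : Type*} [NormedAddCommGroup X] [NormedSpace ℝ X] [CompleteSpace X]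
    [NormedAddCommGroup Y] [NormedSpace ℝ Y] [CompleteSpace Y]
    (F : X → Set Y) (xbar : X) (ybar : Y) (hmem : ybar ∈ F xbar)
    (hreg : regModulus F xbar ybar < ⊤)
    (c : ℝ) (hc : 0 < c)
    (hcc : ∀ y ∈ closedBall ybar c,
      Convex ℝ ({x | y ∈ F x} ∩ closedBall xbar c) ∧
      IsClosed ({x | y ∈ F x} ∩ closedBall xbar c)) :
    ∃ V ∈ nhds ybar, ∃ U ∈ nhds xbar, ∃ s : Y → X,
      ContinuousOn s V ∧ s ybar = xbar ∧
      (∀ y ∈ V, s y ∈ U ∧ y ∈ F (s y)) ∧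
      clmModulus s ybar ≤ regModulus F xbar ybar :=
  inverse_has_continuous_calm_local_selection_general F xbar ybar hmem hreg c hc hcc
end

section
/- Let X and Y be Banach spaces, let F : X ⇒ Y be a set-valued mapping with (x̄, ȳ) ∈ gph F whose graph has a closed intersection with some neighborhood of (x̄, ȳ), and let G : X → Y. If reg F(x̄|ȳ) < κ < ∞ and lip G(x̄) < λ < κ⁻¹, then reg(F + G)(x̄ | ȳ + G(x̄)) < (κ⁻¹ − λ)⁻¹. -/
/-! Solving `y ∈ F x + G x` means finding a fixed point of the set-valued map
`Φ x = F⁻¹(y - G x)`. Near `(xbar, ybar)` this map is contractive with ratio `κ * l`: if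
`x' ∈ Φ x`, the residual `d(y - G x', F x')` is at most `l * d(x, x')`, and regularity of `F`
with constant `κ` yields `x'' ∈ Φ x'` with `d(x', x'') ≤ κ * l * d(x, x')`. The iterates form a
Cauchy sequence; local closedness of `gph F` makes its limit a fixed point, found within
`κ / (1 - κ * l) * d(y - G x, F x) = (κ⁻¹ - l)⁻¹ * d(y - G x, F x)` of the starting point. -/

open Metric Filter

/-- The Lipschitz modulus `lip G(xbar)` of `G : X → Y` at `xbar`: the infimum of constants
`l` such that `G` is Lipschitz with constant `l` on some neighborhood of `xbar`
(equivalently, the limsup of `‖G x' - G x‖ / ‖x' - x‖` as `x, x' → xbar`). -/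
noncomputable def lipModulus {X Y : Type*} [NormedAddCommGroup X] [NormedAddCommGroup Y]
    (G : X → Y) (xbar : X) : ENNReal :=
  ⨅ (l : NNReal) (_ : ∃ ε > (0 : ℝ), ∀ x ∈ ball xbar ε, ∀ x' ∈ ball xbar ε,
      ‖G x' - G x‖ ≤ (l : ℝ) * ‖x' - x‖), (l : ENNReal)

open Topology Set
open scoped NNReal ENNReal

theorem exists_fixedPoint_of_dist_step_le {X : Type*} [PseudoMetricSpace X] [CompleteSpace X]
    {Φ : X → Set X} {θ r : ℝ} (hθ₀ : 0 ≤ θ) (hθ₁ : θ < 1) {x₀ x₁ : X} (hx₁ : x₁ ∈ Φ x₀)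
    (hr : dist x₀ x₁ ≤ (1 - θ) * r)
    (hΦ : IsClosed (closedBall x₀ r ×ˢ closedBall x₀ r ∩ {p | p.2 ∈ Φ p.1}))
    (hstep : ∀ x ∈ closedBall x₀ r, ∀ x' ∈ closedBall x₀ r, x' ∈ Φ x →
      ∃ x'' ∈ Φ x', dist x' x'' ≤ θ * dist x x') :
    ∃ x ∈ closedBall x₀ r, x ∈ Φ x := by
  choose! next hnext_mem hnext_dist using hstep
  set c := (1 - θ) * r
  let u : ℕ → X × X := fun n => (fun p => (p.2, next p.1 p.2))^[n] (x₀, x₁)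
  have hu_succ (n : ℕ) : u (n + 1) = ((u n).2, next (u n).1 (u n).2) :=
    Function.iterate_succ_apply' _ _ _
  have hr₀ : 0 ≤ r := nonneg_of_mul_nonneg_right (dist_nonneg.trans hr) (by linarith)
  have hball {z : X} {n : ℕ} (h : dist x₀ z ≤ (1 - θ ^ n) * r) : z ∈ closedBall x₀ r := by
    rw [mem_closedBall_comm]; exact h.trans (by nlinarith [pow_nonneg hθ₀ n])
  have hiter (n : ℕ) : (u n).2 ∈ Φ (u n).1 ∧ dist (u n).1 (u n).2 ≤ c * θ ^ n ∧
      dist x₀ (u n).1 ≤ (1 - θ ^ n) * r := by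
    induction n with
    | zero => exact ⟨hx₁, by simpa [u] using hr, by simp [u]⟩
    | succ n ih =>
      obtain ⟨hmem, hdist, hx₀n⟩ := ih
      have hx₀succ : dist x₀ (u n).2 ≤ (1 - θ ^ (n + 1)) * r :=
        calc dist x₀ (u n).2 ≤ dist x₀ (u n).1 + dist (u n).1 (u n).2 := dist_triangle _ _ _
          _ ≤ (1 - θ ^ n) * r + c * θ ^ n := add_le_add hx₀n hdist
          _ = (1 - θ ^ (n + 1)) * r := by ring
      have h₁ := hball hx₀n
      have h₂ := hball hx₀succ
      rw [hu_succ]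
      refine ⟨hnext_mem _ h₁ _ h₂ hmem, (hnext_dist _ h₁ _ h₂ hmem).trans ?_, hx₀succ⟩
      calc θ * dist (u n).1 (u n).2 ≤ θ * (c * θ ^ n) := mul_le_mul_of_nonneg_left hdist hθ₀
        _ = c * θ ^ (n + 1) := by ring
  have hfst_succ (n : ℕ) : (u (n + 1)).1 = (u n).2 := by rw [hu_succ]
  have hdist (n : ℕ) : dist (u n).1 (u (n + 1)).1 ≤ c * θ ^ n := hfst_succ n ▸ (hiter n).2.1
  obtain ⟨x, hx⟩ := cauchySeq_tendsto_of_complete (cauchySeq_of_le_geometric θ c hθ₁ hdist)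
  have hpair : Tendsto u atTop (𝓝 (x, x)) := by
    have hsnd : Tendsto (fun n => (u n).2) atTop (𝓝 x) := by
      simpa only [Function.comp_def, hfst_succ] using hx.comp (tendsto_add_atTop_nat 1)
    exact hx.prodMk_nhds hsnd
  have hu_mem (n : ℕ) : u n ∈ closedBall x₀ r ×ˢ closedBall x₀ r ∩ {p | p.2 ∈ Φ p.1} := by
    obtain ⟨hmem, -, hx₀n⟩ := hiter n
    exact ⟨⟨hball hx₀n, hfst_succ n ▸ hball (hiter (n + 1)).2.2⟩, hmem⟩
  obtain ⟨⟨hxB, -⟩, hxΦ⟩ := hΦ.mem_of_tendsto hpair (Eventually.of_forall hu_mem)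
  exact ⟨x, hxB, hxΦ⟩

theorem exists_of_iInf_lt_ofReal {P : ℝ≥0 → Prop} {a : ℝ}
    (h : ⨅ (k : ℝ≥0) (_ : P k), (k : ℝ≥0∞) < ENNReal.ofReal a) : ∃ k, P k ∧ (k : ℝ) < a := by
  simp only [iInf_lt_iff] at h
  obtain ⟨k, hk, hlt⟩ := h
  exact ⟨k, hk, ENNReal.coe_lt_ofReal.1 hlt⟩

theorem infEDist_le_mul_infEDist_of_exists {X Y : Type*} [PseudoMetricSpace X]
    [PseudoMetricSpace Y] {S : Set X} {T : Set Y} {x : X} {y : Y} {μ : ℝ≥0} (hμ : μ ≠ 0)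
    (h : T.Nonempty → ∃ x' ∈ S, dist x x' ≤ μ * infDist y T) :
    infEDist x S ≤ μ * infEDist y T := by
  rcases T.eq_empty_or_nonempty with rfl | hT
  · simp [ENNReal.mul_top, hμ]
  obtain ⟨x', hx', hdist⟩ := h hT
  calc infEDist x S ≤ edist x x' := infEDist_le_edist_of_mem hx'
    _ ≤ ENNReal.ofReal (μ * infDist y T) :=
        (edist_le_ofReal (mul_nonneg μ.coe_nonneg infDist_nonneg)).2 hdist
    _ = μ * infEDist y T := by
      rw [ENNReal.ofReal_mul μ.coe_nonneg, ENNReal.ofReal_coe_nnreal, infDist,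
        ENNReal.ofReal_toReal (infEDist_ne_top hT)]

theorem mem_image_add_right_iff {Y : Type*} [AddGroup Y] {S : Set Y} {a y : Y} :
    y ∈ (fun v => v + a) '' S ↔ y - a ∈ S := by
  simp [image_add_right, sub_eq_add_neg]

theorem infEDist_image_add_right {Y : Type*} [SeminormedAddCommGroup Y] (S : Set Y) (a y : Y) :
    infEDist y ((fun v => v + a) '' S) = infEDist (y - a) S := by
  simpa using infEDist_image (x := y - a) (t := S) (isometry_add_right a)

theorem div_one_sub_mul_lt_inv_sub_inv {κ l lam : ℝ} (hκ : 0 < κ) (hl : l < lam)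
    (hlam : lam < κ⁻¹) : κ / (1 - κ * l) < (κ⁻¹ - lam)⁻¹ := by
  rw [show κ / (1 - κ * l) = (κ⁻¹ - l)⁻¹ by field_simp]
  exact (inv_lt_inv₀ (by linarith) (by linarith)).2 (by linarith)

theorem mem_of_mem_closure_of_isClosed_graph_inter {X Y : Type*} [TopologicalSpace X]
    [TopologicalSpace Y] {F : X → Set Y} {W : Set (X × Y)}
    (hK : IsClosed ({p : X × Y | p.2 ∈ F p.1} ∩ W)) {x : X} {y : Y} (hW : W ∈ 𝓝 (x, y))
    (hy : y ∈ closure (F x)) : y ∈ F x := by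
  have hWy : (fun v => (x, v)) ⁻¹' W ∈ 𝓝 y :=
    (Continuous.prodMk_right x).continuousAt.preimage_mem_nhds hW
  have hy' : y ∈ closure (F x ∩ (fun v => (x, v)) ⁻¹' W) := mem_closure_iff_nhds.2 fun t ht => by
    simpa only [inter_assoc, inter_comm (F x)] using mem_closure_iff_nhds.1 hy _ (inter_mem ht hWy)
  exact ((hK.preimage (Continuous.prodMk_right x)).closure_subset hy').1

theorem exists_dist_le_mul_infDist_of_infEDist_le {X Y : Type*} [PseudoMetricSpace X]
    [PseudoMetricSpace Y] {F : X → Set Y} {W : Set (X × Y)}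
    (hK : IsClosed ({p : X × Y | p.2 ∈ F p.1} ∩ W)) {x : X} {y : Y} (hW : W ∈ 𝓝 (x, y))
    (hne : (F x).Nonempty) {κ₀ : ℝ≥0} {κ : ℝ} (hκ : κ₀ < κ)
    (hreg : infEDist x {x' | y ∈ F x'} ≤ κ₀ * infEDist y (F x)) :
    ∃ x', y ∈ F x' ∧ dist x x' ≤ κ * infDist y (F x) := by
  -- the strict inequality `κ₀ < κ` gains nothing when the residual vanishes; closedness does
  rcases (infDist_nonneg (x := y) (s := F x)).eq_or_lt with h₀ | hpos
  · refine ⟨x, mem_of_mem_closure_of_isClosed_graph_inter hK hW ?_, by simp [← h₀]⟩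
    exact (mem_closure_iff_infDist_zero hne).2 h₀.symm
  · have hlt : infEDist x {x' | y ∈ F x'} < ENNReal.ofReal (κ * infDist y (F x)) := by
      have hd : infEDist y (F x) = ENNReal.ofReal (infDist y (F x)) :=
        (ENNReal.ofReal_toReal (infEDist_ne_top hne)).symm
      refine hreg.trans_lt ?_
      rw [hd, ← ENNReal.ofReal_coe_nnreal, ← ENNReal.ofReal_mul κ₀.coe_nonneg,
        ENNReal.ofReal_lt_ofReal_iff (mul_pos (κ₀.coe_nonneg.trans_lt hκ) hpos)]
      exact mul_lt_mul_of_pos_right hκ hpos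
    obtain ⟨x', hx', hdist⟩ := infEDist_lt_iff.1 hlt
    exact ⟨x', hx', (edist_lt_ofReal.1 hdist).le⟩

theorem exists_mem_closedBall_sub_mem_of_lipschitzOnWith {X Y : Type*} [PseudoMetricSpace X]
    [CompleteSpace X] [SeminormedAddCommGroup Y] {F : X → Set Y} {G : X → Y} {W : Set (X × Y)}
    {U : Set X} {V : Set Y} (hK : IsClosed ({p : X × Y | p.2 ∈ F p.1} ∩ W)) (hU : IsOpen U)
    (hV : IsOpen V) (hUV : U ×ˢ V ⊆ W) {κ₀ l : ℝ≥0} {κ : ℝ} (hκ : κ₀ < κ) (hκl : κ * l < 1)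
    (hreg : ∀ x ∈ U, ∀ y ∈ V, infEDist x {x' | y ∈ F x'} ≤ κ₀ * infEDist y (F x))
    (hG : LipschitzOnWith l G U) {y : Y} {x₀ : X} (hne : (F x₀).Nonempty) {r : ℝ}
    (hr : κ / (1 - κ * l) * infDist (y - G x₀) (F x₀) ≤ r)
    (hB : closedBall x₀ r ⊆ U ∩ (fun x => y - G x) ⁻¹' V) :
    ∃ x ∈ closedBall x₀ r, y - G x ∈ F x := by
  have hκ₀ : 0 < κ := κ₀.coe_nonneg.trans_lt hκ
  have hθ : 0 < 1 - κ * l := by linarith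
  set Φ : X → Set X := fun x => {x' | y - G x ∈ F x'}
  have hstep {x : X} (hx : x ∈ closedBall x₀ r) (hne : (F x).Nonempty) :
      ∃ x' ∈ Φ x, dist x x' ≤ κ * infDist (y - G x) (F x) :=
    exists_dist_le_mul_infDist_of_infEDist_le hK
      (mem_of_superset ((hU.prod hV).mem_nhds (hB hx)) hUV) hne hκ (hreg _ (hB hx).1 _ (hB hx).2)
  have hr₀ : 0 ≤ r := (mul_nonneg (div_nonneg hκ₀.le hθ.le) infDist_nonneg).trans hr
  obtain ⟨x₁, hx₁, hd₁⟩ := hstep (mem_closedBall_self hr₀) hne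
  refine exists_fixedPoint_of_dist_step_le (θ := κ * l) (by positivity) (by linarith) hx₁ ?_ ?_ ?_
  · calc dist x₀ x₁ ≤ κ * infDist (y - G x₀) (F x₀) := hd₁
      _ = (1 - κ * l) * (κ / (1 - κ * l) * infDist (y - G x₀) (F x₀)) := by field_simp
      _ ≤ (1 - κ * l) * r := by gcongr
  · have hgraph : closedBall x₀ r ×ˢ closedBall x₀ r ∩ {p | p.2 ∈ Φ p.1} =
        closedBall x₀ r ×ˢ closedBall x₀ r ∩
          (fun p : X × X => (p.2, y - G p.1)) ⁻¹' ({p : X × Y | p.2 ∈ F p.1} ∩ W) := by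
      ext ⟨x, x'⟩
      simp only [mem_inter_iff, mem_prod, mem_preimage, Φ]
      constructor
      · rintro ⟨⟨hx, hx'⟩, h⟩
        exact ⟨⟨hx, hx'⟩, h, hUV ⟨(hB hx').1, (hB hx).2⟩⟩
      · rintro ⟨hxx', h, -⟩
        exact ⟨hxx', h⟩
    have hcont : ContinuousOn (fun p : X × X => (p.2, y - G p.1))
        (closedBall x₀ r ×ˢ closedBall x₀ r) :=
      continuousOn_snd.prodMk (continuousOn_const.sub
        (hG.continuousOn.comp continuousOn_fst fun p hp => (hB hp.1).1))
    rw [hgraph]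
    exact hcont.preimage_isClosed_of_isClosed (isClosed_closedBall.prod isClosed_closedBall) hK
  · intro x hx x' hx' hxx'
    obtain ⟨x'', hx'', hd⟩ := hstep hx' ⟨_, hxx'⟩
    refine ⟨x'', hx'', hd.trans ?_⟩
    calc κ * infDist (y - G x') (F x') ≤ κ * dist (y - G x') (y - G x) :=
          mul_le_mul_of_nonneg_left (infDist_le_dist_of_mem hxx') hκ₀.le
      _ ≤ κ * (l * dist x' x) := by
          rw [dist_sub_left]
          exact mul_le_mul_of_nonneg_left (hG.dist_le_mul _ (hB hx').1 _ (hB hx).1) hκ₀.le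
      _ = κ * l * dist x x' := by rw [dist_comm]; ring

theorem exists_pos_forall_exists_mem_sub_dist_le {X Y : Type*} [PseudoMetricSpace X]
    [CompleteSpace X] [SeminormedAddCommGroup Y] {F : X → Set Y} {G : X → Y} {W : Set (X × Y)}
    {xbar : X} {ybar : Y} {ε : ℝ} (hK : IsClosed ({p : X × Y | p.2 ∈ F p.1} ∩ W))
    (hW : ball xbar ε ×ˢ ball ybar ε ⊆ W) (hε : 0 < ε) (hmem : ybar ∈ F xbar)
    {κ₀ l : ℝ≥0} {κ : ℝ} (hκ : κ₀ < κ) (hκl : κ * l < 1)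
    (hreg : ∀ x ∈ ball xbar ε, ∀ y ∈ ball ybar ε,
      infEDist x {x' | y ∈ F x'} ≤ κ₀ * infEDist y (F x))
    (hG : LipschitzOnWith l G (ball xbar ε)) :
    ∃ δ > 0, ∀ x ∈ ball xbar δ, ∀ y ∈ ball (ybar + G xbar) δ, (F x).Nonempty →
      ∃ x', y - G x' ∈ F x' ∧ dist x x' ≤ κ / (1 - κ * l) * infDist (y - G x) (F x) := by
  set μ := κ / (1 - κ * l)
  have hμ : 0 < μ := div_pos (κ₀.coe_nonneg.trans_lt hκ) (by linarith)
  set δ := ε / ((2 + μ) * (1 + l))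
  have hδ : 0 < δ := by positivity
  have hδε : (2 + μ) * δ + l * ((2 + μ) * δ) = ε := by
    simp only [δ]; field_simp
  have hshift (y : Y) : dist (y - G xbar) ybar = dist y (ybar + G xbar) := by
    rw [dist_eq_norm, dist_eq_norm, sub_sub, add_comm]
  -- both starting points used below lie in `ball xbar δ`, and both radii are `≤ (1 + μ) * δ`
  have hloc {x₀ : X} (hx₀ : x₀ ∈ ball xbar δ) {y : Y} (hy : y ∈ ball (ybar + G xbar) δ) {r : ℝ}
      (hr : r ≤ (1 + μ) * δ) :
      closedBall x₀ r ⊆ ball xbar ε ∩ (fun x => y - G x) ⁻¹' ball ybar ε := by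
    intro z hz
    have hzx : dist z xbar < (2 + μ) * δ := by
      linarith [dist_triangle z x₀ xbar, mem_closedBall.1 hz, mem_ball.1 hx₀]
    have hzε : z ∈ ball xbar ε := mem_ball.2 (by nlinarith [l.coe_nonneg])
    refine ⟨hzε, mem_ball.2 ?_⟩
    calc dist (y - G z) ybar ≤ dist (y - G z) (y - G xbar) + dist (y - G xbar) ybar :=
          dist_triangle _ _ _
      _ = dist (G z) (G xbar) + dist y (ybar + G xbar) := by
          rw [dist_sub_left, hshift, dist_comm]
      _ < l * ((2 + μ) * δ) + (2 + μ) * δ := by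
          refine add_lt_add_of_le_of_lt ?_ ((mem_ball.1 hy).trans_le (by nlinarith))
          exact (hG.dist_le_mul _ hzε _ (mem_ball_self hε)).trans
            (mul_le_mul_of_nonneg_left hzx.le l.coe_nonneg)
      _ = ε := by linarith
  have hsolve {x₀ : X} {y : Y} {r : ℝ} :=
    exists_mem_closedBall_sub_mem_of_lipschitzOnWith (x₀ := x₀) (y := y) (r := r) hK
      isOpen_ball isOpen_ball hW hκ hκl hreg hG
  refine ⟨δ, hδ, fun x hx y hy hne => ?_⟩
  by_cases hnear : μ * infDist (y - G x) (F x) ≤ (1 + μ) * δ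
  · obtain ⟨x', hx', hsol⟩ := hsolve hne le_rfl (hloc hx hy hnear)
    exact ⟨x', hsol, mem_closedBall'.1 hx'⟩
  · -- start from `xbar` instead, where the residual is at most `δ`
    have hres : infDist (y - G xbar) (F xbar) ≤ δ := by
      refine (infDist_le_dist_of_mem hmem).trans ?_
      rw [hshift]
      exact (mem_ball.1 hy).le
    obtain ⟨x', hx', hsol⟩ := hsolve ⟨ybar, hmem⟩ (mul_le_mul_of_nonneg_left hres hμ.le)
      (hloc (mem_ball_self hδ) hy (by nlinarith))
    refine ⟨x', hsol, ?_⟩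
    linarith [dist_triangle x xbar x', mem_ball.1 hx, mem_closedBall'.1 hx']

theorem metric_regularity_stable_under_lipschitz_perturbation_general
    {X Y : Type*} [NormedAddCommGroup X] [CompleteSpace X]
    [NormedAddCommGroup Y]
    (F : X → Set Y) (xbar : X) (ybar : Y) (hmem : ybar ∈ F xbar)
    (hclosed : ∃ W ∈ nhds ((xbar, ybar) : X × Y),
      IsClosed ({p : X × Y | p.2 ∈ F p.1} ∩ W))
    (G : X → Y) (κ lam : ℝ)
    (hκ : regModulus F xbar ybar < ENNReal.ofReal κ)
    (hlam : lipModulus G xbar < ENNReal.ofReal lam) (hlt : lam < κ⁻¹) :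
    regModulus (fun x => (fun v => v + G x) '' F x) xbar (ybar + G xbar)
      < ENNReal.ofReal (κ⁻¹ - lam)⁻¹ := by
  obtain ⟨κ₀, ⟨ε₁, hε₁, hreg⟩, hκ₀⟩ := exists_of_iInf_lt_ofReal hκ
  obtain ⟨l, ⟨ε₂, hε₂, hlip⟩, hl⟩ := exists_of_iInf_lt_ofReal hlam
  obtain ⟨W, hW, hK⟩ := hclosed
  obtain ⟨ε₃, hε₃, hWball⟩ := Metric.mem_nhds_iff.1 hW
  set ε := min ε₁ (min ε₂ ε₃)
  have hκpos : 0 < κ := κ₀.coe_nonneg.trans_lt hκ₀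
  have hκl : κ * l < 1 :=
    (mul_lt_mul_of_pos_left (hl.trans hlt) hκpos).trans_eq (mul_inv_cancel₀ hκpos.ne')
  have hG : LipschitzOnWith l G (ball xbar ε) :=
    (LipschitzOnWith.of_dist_le_mul fun x hx x' hx' => by
      simpa only [dist_eq_norm] using hlip x' hx' x hx).mono
      (ball_subset_ball ((min_le_right _ _).trans (min_le_left _ _)))
  have hWε : ball xbar ε ×ˢ ball ybar ε ⊆ W := by
    rw [ball_prod_same]
    exact (ball_subset_ball ((min_le_right _ _).trans (min_le_right _ _))).trans hWball
  obtain ⟨δ, hδ, hsol⟩ := exists_pos_forall_exists_mem_sub_dist_le hK hWε (by positivity) hmem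
    hκ₀ hκl (fun x hx y hy => hreg x (ball_subset_ball (min_le_left _ _) hx) y
      (ball_subset_ball (min_le_left _ _) hy)) hG
  have hμ : 0 < κ / (1 - κ * l) := div_pos hκpos (by linarith)
  let μ : ℝ≥0 := ⟨κ / (1 - κ * l), hμ.le⟩
  refine (iInf₂_le μ ⟨δ, hδ, fun x hx y hy => ?_⟩).trans_lt
    (ENNReal.coe_lt_ofReal.2 (div_one_sub_mul_lt_inv_sub_inv hκpos hl hlt))
  -- `regModulus` is phrased with the deprecated alias `EMetric.infEdist` of `infEDist`
  change infEDist x _ ≤ μ * infEDist y _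
  simp only [mem_image_add_right_iff, infEDist_image_add_right]
  exact infEDist_le_mul_infEDist_of_exists (ne_of_gt hμ) (hsol x hx y hy)

/-- Lyusternik–Graves-type perturbation theorem (Theorem 3.1): if `gph F` has a closed
intersection with a neighborhood of `(xbar, ybar)`, `reg F(xbar|ybar) < κ < ∞` and
`lip G(xbar) < λ < κ⁻¹`, then `reg (F + G)(xbar | ybar + G xbar) < (κ⁻¹ - λ)⁻¹`. -/
theorem metric_regularity_stable_under_lipschitz_perturbation
    {X Y : Type*} [NormedAddCommGroup X] [NormedSpace ℝ X] [CompleteSpace X]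
    [NormedAddCommGroup Y] [NormedSpace ℝ Y] [CompleteSpace Y]
    (F : X → Set Y) (xbar : X) (ybar : Y) (hmem : ybar ∈ F xbar)
    (hclosed : ∃ W ∈ nhds ((xbar, ybar) : X × Y),
      IsClosed ({p : X × Y | p.2 ∈ F p.1} ∩ W))
    (G : X → Y) (κ lam : ℝ)
    (hκ : regModulus F xbar ybar < ENNReal.ofReal κ)
    (hlam : lipModulus G xbar < ENNReal.ofReal lam) (hlt : lam < κ⁻¹) :
    regModulus (fun x => (fun v => v + G x) '' F x) xbar (ybar + G xbar)
      < ENNReal.ofReal (κ⁻¹ - lam)⁻¹ :=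
  metric_regularity_stable_under_lipschitz_perturbation_general F xbar ybar hmem hclosed G κ lam hκ
    hlam hlt
end

section
/- Let X and Y be Banach spaces and let f : X → Y be strictly differentiable at x̄. Then reg f(x̄ | f(x̄)) = reg ∇f(x̄), the modulus of metric regularity of the strict derivative ∇f(x̄) (taken at any point, by linearity). In particular, f is metrically regular at x̄ for f(x̄) if and only if the bounded linear operator ∇f(x̄) is surjective. -/
open Metric Filter

/-! Both moduli are compared with the constants `K` for which every `y` has a `B`-preimage of
norm at most `K ‖y‖`. If `f` is metrically regular at `xbar` with constant `κ`, solving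
`f x = f xbar + v` for small `v` and using the strict derivative gives approximate preimages under
`B` with a small relative residual; iterating this (a geometric series in the Banach space `X`)
gives exact preimages with any constant `K > κ`. Conversely, such preimages form a nonlinear right
inverse of `B`, and the surjectivity-on-balls part of the inverse function theorem makes `f`
metrically regular with any constant `r > K`. Since `B` is its own strict derivative, both steps
also apply to `B`, so the two moduli coincide; when `B` is surjective, the open mapping theorem
supplies a finite `K`. -/

open Topology NNReal

section MetricRegularity

variable {X Y : Type*}

def IsMetricRegularWith [PseudoMetricSpace X] [PseudoMetricSpace Y]
    (F : X → Set Y) (xbar : X) (ybar : Y) (κ : ℝ≥0) : Prop :=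
  ∃ ε > (0 : ℝ), ∀ x ∈ ball xbar ε, ∀ y ∈ ball ybar ε,
    infEDist x {x' | y ∈ F x'} ≤ (κ : ENNReal) * infEDist y (F x)

theorem isMetricRegularWith_iff_eventually [PseudoMetricSpace X] [PseudoMetricSpace Y]
    {F : X → Set Y} {xbar : X} {ybar : Y} {κ : ℝ≥0} :
    IsMetricRegularWith F xbar ybar κ ↔ ∀ᶠ p in 𝓝 (xbar, ybar),
      infEDist p.1 {x' | p.2 ∈ F x'} ≤ (κ : ENNReal) * infEDist p.2 (F p.1) := by
  simp only [IsMetricRegularWith, Metric.eventually_nhds_iff, Prod.dist_eq, max_lt_iff, mem_ball]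
  exact ⟨fun ⟨ε, hε, h⟩ => ⟨ε, hε, fun p hp => h _ hp.1 _ hp.2⟩,
    fun ⟨ε, hε, h⟩ => ⟨ε, hε, fun x hx y hy => @h (x, y) ⟨hx, hy⟩⟩⟩

theorem isMetricRegularWith_singleton_iff [PseudoMetricSpace X] [PseudoMetricSpace Y]
    {f : X → Y} {xbar : X} {ybar : Y} {κ : ℝ≥0} :
    IsMetricRegularWith (fun x => {f x}) xbar ybar κ ↔ ∀ᶠ p in 𝓝 (xbar, ybar),
      infEDist p.1 (f ⁻¹' {p.2}) ≤ (κ : ENNReal) * edist p.2 (f p.1) := by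
  simp only [isMetricRegularWith_iff_eventually, infEDist_singleton, Set.mem_singleton_iff,
    eq_comm (a := (_ : Prod X Y).2)]
  rfl

theorem isMetricRegularWith_of_eventually_exists_preimage [PseudoMetricSpace X]
    [PseudoMetricSpace Y] {f : X → Y} {xbar : X} {ybar : Y} {κ : ℝ≥0}
    (h : ∀ᶠ p in 𝓝 (xbar, ybar), ∃ x', f x' = p.2 ∧ dist p.1 x' ≤ κ * dist p.2 (f p.1)) :
    IsMetricRegularWith (fun x => {f x}) xbar ybar κ := by
  rw [isMetricRegularWith_singleton_iff]
  filter_upwards [h] with p ⟨x', hx', hdist⟩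
  calc infEDist p.1 (f ⁻¹' {p.2}) ≤ edist p.1 x' := infEDist_le_edist_of_mem hx'
    _ ≤ ENNReal.ofReal (κ * dist p.2 (f p.1)) := by
        rw [edist_dist]; exact ENNReal.ofReal_le_ofReal hdist
    _ = κ * edist p.2 (f p.1) := by
        rw [ENNReal.ofReal_mul κ.coe_nonneg, ENNReal.ofReal_coe_nnreal, edist_dist]

theorem IsMetricRegularWith.eventually_exists_preimage [PseudoMetricSpace X]
    [MetricSpace Y] {f : X → Y} {xbar : X} {ybar : Y} {κ : ℝ≥0} {κ₁ : ℝ}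
    (h : IsMetricRegularWith (fun x => {f x}) xbar ybar κ) (hκ : κ < κ₁) :
    ∀ᶠ p in 𝓝 (xbar, ybar), ∃ x', f x' = p.2 ∧ dist p.1 x' ≤ κ₁ * dist p.2 (f p.1) := by
  rw [isMetricRegularWith_singleton_iff] at h
  filter_upwards [h] with p hp
  rcases eq_or_ne p.2 (f p.1) with hfp | hfp
  · exact ⟨p.1, hfp.symm, by rw [dist_self, hfp, dist_self, mul_zero]⟩
  have hκ₁ : 0 < κ₁ := κ.coe_nonneg.trans_lt hκ
  have hd : 0 < dist p.2 (f p.1) := dist_pos.mpr hfp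
  have hlt : infEDist p.1 (f ⁻¹' {p.2}) < ENNReal.ofReal (κ₁ * dist p.2 (f p.1)) :=
    calc infEDist p.1 (f ⁻¹' {p.2}) ≤ κ * edist p.2 (f p.1) := hp
      _ = ENNReal.ofReal (κ * dist p.2 (f p.1)) := by
        rw [edist_dist, ENNReal.ofReal_mul κ.coe_nonneg, ENNReal.ofReal_coe_nnreal]
      _ < ENNReal.ofReal (κ₁ * dist p.2 (f p.1)) :=
        (ENNReal.ofReal_lt_ofReal_iff (by positivity)).2 (mul_lt_mul_of_pos_right hκ hd)
  obtain ⟨x', hx', hdist⟩ := infEDist_lt_iff.mp hlt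
  rw [edist_dist, ENNReal.ofReal_lt_ofReal_iff (by positivity)] at hdist
  exact ⟨x', hx', hdist.le⟩

end MetricRegularity

section Modulus

variable {X Y X' Y' : Type*} [NormedAddCommGroup X] [NormedAddCommGroup Y]
  {F : X → Set Y} {xbar : X} {ybar : Y}

theorem regModulus_le_of_isMetricRegularWith {κ : ℝ≥0} (h : IsMetricRegularWith F xbar ybar κ) :
    regModulus F xbar ybar ≤ κ :=
  iInf₂_le κ h

theorem regModulus_lt_top_iff :
    regModulus F xbar ybar < ⊤ ↔ ∃ κ, IsMetricRegularWith F xbar ybar κ := by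
  refine ⟨fun h => ?_, fun ⟨κ, hκ⟩ =>
    (regModulus_le_of_isMetricRegularWith hκ).trans_lt ENNReal.coe_lt_top⟩
  by_contra! hne
  exact h.ne (iInf₂_eq_top.2 fun κ hκ => (hne κ hκ).elim)

theorem regModulus_le_regModulus_of_forall_lt [NormedAddCommGroup X'] [NormedAddCommGroup Y']
    {G : X' → Set Y'} {zbar : X'} {wbar : Y'}
    (h : ∀ κ r : ℝ≥0, IsMetricRegularWith F xbar ybar κ → κ < r →
      IsMetricRegularWith G zbar wbar r) :
    regModulus G zbar wbar ≤ regModulus F xbar ybar := by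
  refine le_iInf₂ fun κ hκ => le_of_forall_gt_imp_ge_of_dense fun a hκa => ?_
  obtain ⟨r, hκr, hra⟩ := ENNReal.lt_iff_exists_nnreal_btwn.mp hκa
  exact (regModulus_le_of_isMetricRegularWith (h κ r hκ (ENNReal.coe_lt_coe.mp hκr))).trans hra.le

end Modulus

theorem ContinuousLinearMap.exists_preimage_norm_le_of_approx {𝕜 X Y : Type*} [NormedField 𝕜]
    [NormedAddCommGroup X] [NormedSpace 𝕜 X] [CompleteSpace X]
    [NormedAddCommGroup Y] [NormedSpace 𝕜 Y] (B : X →L[𝕜] Y) {K δ : ℝ} (hK : 0 ≤ K)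
    (hδ₀ : 0 ≤ δ) (hδ₁ : δ < 1) (H : ∀ y, ∃ u, ‖u‖ ≤ K * ‖y‖ ∧ ‖y - B u‖ ≤ δ * ‖y‖) (y : Y) :
    ∃ u, B u = y ∧ ‖u‖ ≤ K / (1 - δ) * ‖y‖ := by
  choose g hg hgB using H
  -- `r n` is what is left to solve after `n` corrections `g (r 0), …, g (r (n - 1))`.
  set r : ℕ → Y := fun n => (fun z => z - B (g z))^[n] y with hr_def
  have hr_succ (n : ℕ) : r (n + 1) = r n - B (g (r n)) := by
    simp only [hr_def, Function.iterate_succ_apply']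
  have hr (n : ℕ) : ‖r n‖ ≤ δ ^ n * ‖y‖ := by
    induction n with
    | zero => simp [hr_def]
    | succ n ih =>
      calc ‖r (n + 1)‖ ≤ δ * ‖r n‖ := hr_succ n ▸ hgB _
        _ ≤ δ * (δ ^ n * ‖y‖) := by gcongr
        _ = δ ^ (n + 1) * ‖y‖ := by ring
  have hu (n : ℕ) : ‖g (r n)‖ ≤ K * ‖y‖ * δ ^ n :=
    calc ‖g (r n)‖ ≤ K * ‖r n‖ := hg _
      _ ≤ K * (δ ^ n * ‖y‖) := by gcongr; exact hr n
      _ = K * ‖y‖ * δ ^ n := by ring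
  have hgeom : HasSum (fun n => K * ‖y‖ * δ ^ n) (K * ‖y‖ * (1 - δ)⁻¹) :=
    (hasSum_geometric_of_lt_one hδ₀ hδ₁).mul_left _
  have hsum : Summable fun n => g (r n) := .of_norm_bounded hgeom.summable hu
  refine ⟨∑' n, g (r n), ?_, ?_⟩
  · have htel (n : ℕ) : B (∑ k ∈ Finset.range n, g (r k)) = y - r n := by
      have hstep (k : ℕ) : B (g (r k)) = r k - r (k + 1) := by rw [hr_succ]; abel
      simp only [map_sum, hstep, Finset.sum_range_sub']
      rfl
    have hlim : Tendsto (fun n => y - r n) atTop (𝓝 (B (∑' n, g (r n)))) := by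
      simpa only [Function.comp_def, htel] using
        (B.continuous.tendsto _).comp hsum.hasSum.tendsto_sum_nat
    have hr0 : Tendsto r atTop (𝓝 0) :=
      squeeze_zero_norm hr <| by
        simpa using (tendsto_pow_atTop_nhds_zero_of_lt_one hδ₀ hδ₁).mul_const ‖y‖
    exact tendsto_nhds_unique hlim (by simpa using tendsto_const_nhds.sub hr0)
  · calc ‖∑' n, g (r n)‖ ≤ K * ‖y‖ * (1 - δ)⁻¹ := tsum_of_norm_bounded hgeom hu
      _ = K / (1 - δ) * ‖y‖ := by ring

section StrictDeriv

variable {X Y : Type*} [NormedAddCommGroup X] [NormedSpace ℝ X]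
  [NormedAddCommGroup Y] [NormedSpace ℝ Y] {B : X →L[ℝ] Y}

theorem ContinuousLinearMap.exists_approx_preimage_of_eventually {K δ : ℝ}
    (h : ∀ᶠ v in 𝓝 (0 : Y), ∃ w, ‖w‖ ≤ K * ‖v‖ ∧ ‖v - B w‖ ≤ δ * ‖v‖) (y : Y) :
    ∃ u, ‖u‖ ≤ K * ‖y‖ ∧ ‖y - B u‖ ≤ δ * ‖y‖ := by
  have hline : Tendsto (fun t : ℝ => t • y) (𝓝[>] 0) (𝓝 0) := by
    have : Tendsto (fun t : ℝ => t • y) (𝓝 0) (𝓝 ((0 : ℝ) • y)) := tendsto_id.smul_const y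
    simpa using tendsto_nhdsWithin_of_tendsto_nhds this
  obtain ⟨t, ⟨w, hw, hBw⟩, ht : 0 < t⟩ := ((hline.eventually h).and self_mem_nhdsWithin).exists
  refine ⟨t⁻¹ • w, ?_, ?_⟩
  · calc ‖t⁻¹ • w‖ = t⁻¹ * ‖w‖ := by rw [norm_smul, Real.norm_of_nonneg (inv_nonneg.2 ht.le)]
      _ ≤ t⁻¹ * (K * ‖t • y‖) := by gcongr
      _ = K * ‖y‖ := by
        rw [norm_smul, Real.norm_of_nonneg ht.le]; field_simp
  · have hres : y - B (t⁻¹ • w) = t⁻¹ • (t • y - B w) := by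
      rw [map_smul, smul_sub, smul_smul, inv_mul_cancel₀ ht.ne', one_smul]
    calc ‖y - B (t⁻¹ • w)‖ = t⁻¹ * ‖t • y - B w‖ := by
          rw [hres, norm_smul, Real.norm_of_nonneg (inv_nonneg.2 ht.le)]
      _ ≤ t⁻¹ * (δ * ‖t • y‖) := by gcongr
      _ = δ * ‖y‖ := by
        rw [norm_smul, Real.norm_of_nonneg ht.le]; field_simp

theorem HasStrictFDerivAt.eventually_approx_preimage_of_isMetricRegularWith {f : X → Y}
    {xbar : X} {κ : ℝ≥0} {κ₁ : ℝ} {c : ℝ≥0} (hf : HasStrictFDerivAt f B xbar)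
    (hreg : IsMetricRegularWith (fun x => {f x}) xbar (f xbar) κ) (hκ : κ < κ₁) (hc : 0 < c) :
    ∀ᶠ v in 𝓝 (0 : Y), ∃ w, ‖w‖ ≤ κ₁ * ‖v‖ ∧ ‖v - B w‖ ≤ c * κ₁ * ‖v‖ := by
  obtain ⟨s, hs, hA⟩ := hf.approximates_deriv_on_nhds (Or.inr hc)
  obtain ⟨ρ, hρ, hρs⟩ := Metric.mem_nhds_iff.mp hs
  have hpre : ∀ᶠ y in 𝓝 (f xbar), ∃ x', f x' = y ∧ dist xbar x' ≤ κ₁ * dist y (f xbar) :=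
    ((Continuous.prodMk_right xbar).tendsto (f xbar)).eventually
      (hreg.eventually_exists_preimage hκ)
  have hshift : Tendsto (fun v => f xbar + v) (𝓝 0) (𝓝 (f xbar)) := by
    simpa using (continuous_const_add (f xbar)).tendsto (0 : Y)
  have hsmall : ∀ᶠ v in 𝓝 (0 : Y), κ₁ * ‖v‖ < ρ :=
    (continuous_const.mul continuous_norm).continuousAt.eventually_lt continuousAt_const
      (by simpa using hρ)
  filter_upwards [hshift.eventually hpre, hsmall] with v ⟨x', hfx', hx'⟩ hv
  rw [dist_comm, dist_eq_norm, dist_eq_norm, add_sub_cancel_left] at hx'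
  have hx's : x' ∈ s := hρs (by rw [mem_ball, dist_eq_norm]; linarith)
  refine ⟨x' - xbar, hx', ?_⟩
  calc ‖v - B (x' - xbar)‖ = ‖f x' - f xbar - B (x' - xbar)‖ := by
        rw [hfx', add_sub_cancel_left]
    _ ≤ c * ‖x' - xbar‖ := hA x' hx's xbar (hρs (mem_ball_self hρ))
    _ ≤ c * (κ₁ * ‖v‖) := by gcongr
    _ = c * κ₁ * ‖v‖ := by ring

theorem HasStrictFDerivAt.exists_preimage_norm_le_of_isMetricRegularWith [CompleteSpace X]
    {f : X → Y} {xbar : X} {κ : ℝ≥0} {K : ℝ} (hf : HasStrictFDerivAt f B xbar)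
    (hreg : IsMetricRegularWith (fun x => {f x}) xbar (f xbar) κ) (hK : κ < K) (y : Y) :
    ∃ u, B u = y ∧ ‖u‖ ≤ K * ‖y‖ := by
  obtain ⟨κ₁, hκ₁, hκ₁K⟩ := exists_between hK
  have hκ₁_pos : 0 < κ₁ := κ.coe_nonneg.trans_lt hκ₁
  -- With `c = κ₁⁻¹ - K⁻¹` the contraction factor `c κ₁ = 1 - κ₁ / K` makes `κ₁ / (1 - c κ₁) = K`.
  have hc : 0 < κ₁⁻¹ - K⁻¹ := sub_pos.2 (inv_strictAnti₀ hκ₁_pos hκ₁K)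
  set c : ℝ≥0 := (κ₁⁻¹ - K⁻¹).toNNReal
  have hc_coe : (c : ℝ) = κ₁⁻¹ - K⁻¹ := Real.coe_toNNReal _ hc.le
  have hδ : (c : ℝ) * κ₁ = 1 - κ₁ / K := by rw [hc_coe]; field_simp
  have happrox := B.exists_approx_preimage_of_eventually
    (hf.eventually_approx_preimage_of_isMetricRegularWith hreg hκ₁ (Real.toNNReal_pos.2 hc))
  obtain ⟨u, hu, hnorm⟩ := B.exists_preimage_norm_le_of_approx hκ₁_pos.le (by positivity)
    (by rw [hδ]; linarith [div_pos hκ₁_pos (hκ₁_pos.trans hκ₁K)]) happrox y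
  refine ⟨u, hu, hnorm.trans_eq ?_⟩
  rw [hδ, sub_sub_cancel, div_div_cancel₀ hκ₁_pos.ne']

theorem HasStrictFDerivAt.eventually_exists_preimage_of_exists_preimage_norm_le [CompleteSpace X]
    {f : X → Y} {xbar : X} {K : ℝ} {r : ℝ≥0} (hf : HasStrictFDerivAt f B xbar) (hK : 0 < K)
    (hKr : K < r) (hB : ∀ y, ∃ u, B u = y ∧ ‖u‖ ≤ K * ‖y‖) :
    ∀ᶠ p in 𝓝 (xbar, f xbar), ∃ x', f x' = p.2 ∧ dist p.1 x' ≤ r * dist p.2 (f p.1) := by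
  choose g hgB hg using hB
  let B' : B.NonlinearRightInverse :=
    ⟨g, K.toNNReal, by simpa [Real.coe_toNNReal _ hK.le] using hg, hgB⟩
  have hc : 0 < K⁻¹ - (r : ℝ)⁻¹ := sub_pos.2 (inv_strictAnti₀ hK hKr)
  set c : ℝ≥0 := (K⁻¹ - (r : ℝ)⁻¹).toNNReal
  have hrad : (B'.nnnorm : ℝ)⁻¹ - c = (r : ℝ)⁻¹ := by
    simp [B', c, Real.coe_toNNReal _ hK.le, Real.coe_toNNReal _ hc.le]
  obtain ⟨s, hs, hA⟩ := hf.approximates_deriv_on_nhds (Or.inr (Real.toNNReal_pos.2 hc))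
  obtain ⟨ρ, hρ, hρs⟩ := Metric.mem_nhds_iff.mp hs
  have hfc : ContinuousAt (fun p : X × Y => f p.1) (xbar, f xbar) :=
    hf.continuousAt.comp continuousAt_fst
  have hnear : ∀ᶠ p in 𝓝 (xbar, f xbar), dist p.1 xbar + r * dist p.2 (f p.1) < ρ :=
    ((continuousAt_fst.dist continuousAt_const).add
      (continuousAt_const.mul (continuousAt_snd.dist hfc))).eventually_lt continuousAt_const
      (by simpa using hρ)
  filter_upwards [hnear] with p hp
  have hball : closedBall p.1 (r * dist p.2 (f p.1)) ⊆ s := fun z hz =>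
    hρs <| by rw [mem_ball]; linarith [dist_triangle z p.1 xbar, mem_closedBall.1 hz]
  have hy : p.2 ∈ closedBall (f p.1) (((B'.nnnorm : ℝ)⁻¹ - c) * (r * dist p.2 (f p.1))) := by
    rw [hrad, inv_mul_cancel_left₀ (hK.trans hKr).ne', mem_closedBall]
  obtain ⟨x', hx', hfx'⟩ :=
    hA.surjOn_closedBall_of_nonlinearRightInverse B' (by positivity) hball hy
  exact ⟨x', hfx', by rw [dist_comm]; exact hx'⟩

theorem HasStrictFDerivAt.isMetricRegularWith_of_isMetricRegularWith [CompleteSpace X]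
    {f g : X → Y} {xbar zbar : X} {κ r : ℝ≥0} (hf : HasStrictFDerivAt f B xbar)
    (hg : HasStrictFDerivAt g B zbar) (hreg : IsMetricRegularWith (fun x => {f x}) xbar (f xbar) κ)
    (hr : κ < r) : IsMetricRegularWith (fun x => {g x}) zbar (g zbar) r := by
  obtain ⟨K, hκK, hKr⟩ := exists_between (NNReal.coe_lt_coe.2 hr)
  exact isMetricRegularWith_of_eventually_exists_preimage <|
    hg.eventually_exists_preimage_of_exists_preimage_norm_le (κ.coe_nonneg.trans_lt hκK) hKr
      (hf.exists_preimage_norm_le_of_isMetricRegularWith hreg hκK)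

theorem HasStrictFDerivAt.regModulus_eq [CompleteSpace X] {f g : X → Y} {xbar zbar : X}
    (hf : HasStrictFDerivAt f B xbar) (hg : HasStrictFDerivAt g B zbar) :
    regModulus (fun x => {f x}) xbar (f xbar) = regModulus (fun x => {g x}) zbar (g zbar) :=
  le_antisymm
    (regModulus_le_regModulus_of_forall_lt fun _ _ h hr =>
      hg.isMetricRegularWith_of_isMetricRegularWith hf h hr)
    (regModulus_le_regModulus_of_forall_lt fun _ _ h hr =>
      hf.isMetricRegularWith_of_isMetricRegularWith hg h hr)

end StrictDeriv

/-- If `f` is strictly differentiable at `xbar`, then `reg f(xbar | f xbar)` equals the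
modulus of metric regularity of the strict derivative `∇f(xbar)` (taken at the origin,
by linearity); in particular, `f` is metrically regular at `xbar` for `f xbar` iff
`∇f(xbar)` is surjective. -/
theorem regModulus_eq_regModulus_strict_deriv
    {X Y : Type*} [NormedAddCommGroup X] [NormedSpace ℝ X] [CompleteSpace X]
    [NormedAddCommGroup Y] [NormedSpace ℝ Y] [CompleteSpace Y]
    (f : X → Y) (xbar : X) (B : X →L[ℝ] Y) (hf : HasStrictFDerivAt f B xbar) :
    regModulus (fun x => {f x}) xbar (f xbar) = regModulus (fun x => {B x}) 0 0 ∧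
    (regModulus (fun x => {f x}) xbar (f xbar) < ⊤ ↔ Function.Surjective B) := by
  have heq : regModulus (fun x => {f x}) xbar (f xbar) = regModulus (fun x => {B x}) 0 0 := by
    simpa only [map_zero] using hf.regModulus_eq (B.hasStrictFDerivAt (x := 0))
  refine ⟨heq, regModulus_lt_top_iff.trans ⟨fun ⟨κ, hκ⟩ y => ?_, fun hsurj => ?_⟩⟩
  · obtain ⟨u, hu, -⟩ := hf.exists_preimage_norm_le_of_isMetricRegularWith hκ (lt_add_one _) y
    exact ⟨u, hu⟩
  · obtain ⟨C, hC, hB⟩ := B.exists_preimage_norm_le hsurj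
    refine ⟨C.toNNReal + 1, isMetricRegularWith_of_eventually_exists_preimage <|
      hf.eventually_exists_preimage_of_exists_preimage_norm_le hC ?_ hB⟩
    simp [Real.coe_toNNReal _ hC.le]
end
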